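/- arXiv:2008.13246 — 8 statements merged into one kernel-verified Lean document; each statement's English description precedes it below -/
import Mathlib

section
/- Let d ≥ 2 and d' ≥ 2 be integers and let G be a partial geometry pg(s,t,α) with parameters s = d(d'−1), t = d'(d−1), α = (d−1)(d'−1). If C is a set of m pairwise orthogonal parallel classes of lines of G, then m ≤ d(dd' − d' + 1). -/
/-- A partial geometry `pg(s,t,α)`: a finite incidence structure of points `P`
and lines `L` (with incidence relation `I`) such that
(1) two distinct points are on at most one common line,
(2) every line has exactly `s+1` points (`s ≥ 1`),
(3) every point is on exactly `t+1` lines (`t ≥ 1`),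
(4) for every non-incident point-line pair `(p, l)` there are exactly `a ≥ 1`
lines through `p` meeting `l`. -/
def IsPartialGeometry {P L : Type*} (I : P → L → Prop) (s t a : ℕ) : Prop :=
  Finite P ∧ Finite L ∧ 1 ≤ s ∧ 1 ≤ t ∧ 1 ≤ a ∧
  (∀ p q : P, p ≠ q → {l : L | I p l ∧ I q l}.ncard ≤ 1) ∧
  (∀ l : L, {p : P | I p l}.ncard = s + 1) ∧
  (∀ p : P, {l : L | I p l}.ncard = t + 1) ∧
  (∀ (p : P) (l : L), ¬ I p l →
    {m : L | I p m ∧ ∃ q : P, I q m ∧ I q l}.ncard = a)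

/-- A parallel class of an incidence structure: a set of pairwise disjoint
lines that covers the point set. -/
def IsParallelClass {P L : Type*} (I : P → L → Prop) (c : Set L) : Prop :=
  (∀ p : P, ∃ l ∈ c, I p l) ∧
  (∀ l ∈ c, ∀ m ∈ c, l ≠ m → ∀ p : P, ¬ (I p l ∧ I p m))

/-- Upper bound on the number of pairwise orthogonal parallel classes: in a
partial geometry with parameters `s = d(d'-1)`, `t = d'(d-1)`,
`α = (d-1)(d'-1)` (`d, d' ≥ 2`), a set of `m` pairwise orthogonal parallel
classes satisfies `m ≤ d(dd' - d' + 1)`. -/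
theorem stmt3 {P L : Type*} {I : P → L → Prop} {d d' m : ℕ}
    (hd : 2 ≤ d) (hd' : 2 ≤ d')
    (hG : IsPartialGeometry I (d * (d' - 1)) (d' * (d - 1)) ((d - 1) * (d' - 1)))
    (C : Set (Set L)) (hm : C.ncard = m)
    (hpar : ∀ c ∈ C, IsParallelClass I c)
    (horth : ∀ c ∈ C, ∀ c' ∈ C, c ≠ c' → (c ∩ c').ncard = 1) :
    m ≤ d * (d * d' - d' + 1) := by
  classical
  obtain ⟨a, rfl⟩ : ∃ a, d = a + 2 := ⟨d - 2, by omega⟩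
  obtain ⟨b, rfl⟩ : ∃ b, d' = b + 2 := ⟨d' - 2, by omega⟩
  obtain ⟨hfinP, hfinL, -, -, -, hpts, hline, hpoint, halpha⟩ := hG
  have hsub1 : (a + 2) - 1 = a + 1 := rfl
  have hsub2 : (b + 2) - 1 = b + 1 := rfl
  simp only [hsub1, hsub2] at hline hpoint halpha
  have hpos1 : 0 < (a + 2) * (b + 1) := Nat.mul_pos (by omega) (by omega)
  have hpos2 : 0 < (b + 2) * (a + 1) := Nat.mul_pos (by omega) (by omega)
  have hgoal : (a + 2) * ((a + 2) * (b + 2) - (b + 2) + 1) = (a + 2) * ((b + 2) * (a + 1) + 1) := by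
    have h : (a + 2) * (b + 2) - (b + 2) = (a + 1) * (b + 2) := by
      rw [Nat.succ_mul]
      omega
    rw [h]
    ring
  rw [hgoal]
  subst hm
  by_cases hP : Nonempty P
  case neg =>
    have hL : IsEmpty L := ⟨fun l => by
      have h1 := hline l
      have h2 : ({p : P | I p l} : Set P) = ∅ :=
        Set.eq_empty_of_forall_notMem (fun p _ => hP ⟨p⟩)
      rw [h2, Set.ncard_empty] at h1
      omega⟩
    have hsubset : C ⊆ {(∅ : Set L)} := fun c _ => by
      simp [Set.eq_empty_of_isEmpty c]
    have h1 : C.ncard ≤ 1 := by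
      have := Set.ncard_le_ncard hsubset (Set.toFinite _)
      rwa [Set.ncard_singleton] at this
    have h2 : 1 ≤ (a + 2) * ((b + 2) * (a + 1) + 1) :=
      Nat.one_le_iff_ne_zero.mpr (Nat.mul_ne_zero (by omega) (by omega))
    omega
  case pos =>
  obtain ⟨p⟩ := hP
  have hexists : ∀ q : P, ∀ c ∈ C, ∃ l ∈ c, I q l := fun q c hc => (hpar c hc).1 q
  -- key: for any line l, at most a+2 classes of C contain l
  have key : ∀ l : L, {c | c ∈ C ∧ l ∈ c}.ncard ≤ a + 2 := by
    intro l
    -- find a point q not on l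
    have hp0 : {p : P | I p l}.Nonempty := by
      rw [← Set.ncard_pos (Set.toFinite _), hline l]
      omega
    obtain ⟨p₀, hp₀⟩ := hp0
    have hn : ∃ n : L, I p₀ n ∧ n ≠ l := by
      by_contra h
      push_neg at h
      have hsubs : {n : L | I p₀ n} ⊆ {l} := fun n hn => h n hn
      have h1 := Set.ncard_le_ncard hsubs (Set.toFinite _)
      rw [hpoint p₀, Set.ncard_singleton] at h1
      omega
    obtain ⟨n, hp₀n, hnl⟩ := hn
    have hq : ∃ q : P, I q n ∧ q ≠ p₀ := by
      by_contra h
      push_neg at h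
      have hsubs : {q : P | I q n} ⊆ {p₀} := fun q hq => h q hq
      have h1 := Set.ncard_le_ncard hsubs (Set.toFinite _)
      rw [hline n, Set.ncard_singleton] at h1
      omega
    obtain ⟨q, hqn, hqp₀⟩ := hq
    have hql : ¬ I q l := by
      intro hql
      have hpair : ({l, n} : Set L) ⊆ {k : L | I p₀ k ∧ I q k} := by
        rintro k (rfl | rfl)
        · exact ⟨hp₀, hql⟩
        · exact ⟨hp₀n, hqn⟩
      have h2 := Set.ncard_le_ncard hpair (Set.toFinite _)
      rw [Set.ncard_pair (fun h : l = n => hnl h.symm)] at h2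
      have h3 := hpts p₀ q (Ne.symm hqp₀)
      omega
    -- the set of lines through q disjoint from l has size a+2
    set M := {k : L | I q k ∧ ∃ r : P, I r k ∧ I r l} with hM
    set N := {k : L | I q k ∧ ¬ ∃ r : P, I r k ∧ I r l} with hN
    have hMN : M.ncard + N.ncard = (b + 2) * (a + 1) + 1 := by
      rw [← hpoint q, ← Set.ncard_union_eq (by
        rw [Set.disjoint_left]; rintro k ⟨-, hk⟩ ⟨-, hk'⟩; exact hk' hk)
        (Set.toFinite _) (Set.toFinite _)]
      congr 1
      ext k
      simp only [hM, hN, Set.mem_union, Set.mem_setOf_eq]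
      constructor
      · rintro (⟨h1, -⟩ | ⟨h1, -⟩) <;> exact h1
      · intro hk
        by_cases h : ∃ r : P, I r k ∧ I r l
        · exact Or.inl ⟨hk, h⟩
        · exact Or.inr ⟨hk, h⟩
    have hMcard : M.ncard = (a + 1) * (b + 1) := halpha q l hql
    have hNcard : N.ncard = a + 2 := by
      have h : (b + 2) * (a + 1) + 1 = (a + 1) * (b + 1) + (a + 2) := by ring
      rw [h, hMcard] at hMN
      omega
    -- inject classes containing l into N
    rw [← hNcard]
    set g : Set L → L := fun c => if h : ∃ k ∈ c, I q k then h.choose else l with hg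
    have hgspec : ∀ c ∈ C, g c ∈ c ∧ I q (g c) := by
      intro c hc
      have h : ∃ k ∈ c, I q k := hexists q c hc
      simp only [hg, dif_pos h]
      exact h.choose_spec
    apply Set.ncard_le_ncard_of_injOn g
    · rintro c ⟨hcC, hlc⟩
      obtain ⟨hgc, hqgc⟩ := hgspec c hcC
      refine ⟨hqgc, ?_⟩
      rintro ⟨r, hrg, hrl⟩
      have hgne : g c ≠ l := fun h => hql (h ▸ hqgc)
      exact (hpar c hcC).2 (g c) hgc l hlc hgne r ⟨hrg, hrl⟩
    · rintro c ⟨hcC, hlc⟩ c' ⟨hc'C, hlc'⟩ hgcc'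
      by_contra hne
      have h1 := horth c hcC c' hc'C hne
      have hgne : g c ≠ l := fun h => hql (h ▸ (hgspec c hcC).2)
      have hpair : ({l, g c} : Set L) ⊆ c ∩ c' := by
        rintro k (rfl | rfl)
        · exact ⟨hlc, hlc'⟩
        · exact ⟨(hgspec c hcC).1, hgcc' ▸ (hgspec c' hc'C).1⟩
      have h2 := Set.ncard_le_ncard hpair (Set.toFinite _)
      rw [Set.ncard_pair (Ne.symm hgne), h1] at h2
      omega
  -- main count: map each class to its line through p
  have hLne : Nonempty L := by
    have hp0 : {l : L | I p l}.Nonempty := by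
      rw [← Set.ncard_pos (Set.toFinite _), hpoint p]
      omega
    exact ⟨hp0.choose⟩
  set F : Set L → L := fun c =>
    if h : ∃ k ∈ c, I p k then h.choose else Classical.arbitrary L with hF
  have hFspec : ∀ c ∈ C, F c ∈ c ∧ I p (F c) := by
    intro c hc
    have h : ∃ k ∈ c, I p k := hexists p c hc
    simp only [hF, dif_pos h]
    exact h.choose_spec
  have key' : ∀ l : L, ∀ s : Finset (Set L), (∀ c ∈ s, c ∈ C ∧ l ∈ c) → s.card ≤ a + 2 := by
    intro l s hs
    have h1 : (↑s : Set (Set L)) ⊆ {c | c ∈ C ∧ l ∈ c} := fun c hc => hs c hc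
    have h2 := Set.ncard_le_ncard h1 (Set.toFinite _)
    rw [Set.ncard_coe_finset] at h2
    exact le_trans h2 (key l)
  have hCfin : C.Finite := Set.toFinite C
  have hLpfin : ({l : L | I p l}).Finite := Set.toFinite _
  have hmaps : ∀ c ∈ hCfin.toFinset, F c ∈ hLpfin.toFinset := by
    intro c hc
    rw [Set.Finite.mem_toFinset] at hc ⊢
    exact (hFspec c hc).2
  have hfib : ∀ l ∈ hLpfin.toFinset, (hCfin.toFinset.filter (fun c => F c = l)).card ≤ a + 2 := by
    intro l _
    apply key' l
    intro c hc
    rw [Finset.mem_filter, Set.Finite.mem_toFinset] at hc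
    obtain ⟨hcC, hFc⟩ := hc
    exact ⟨hcC, hFc ▸ (hFspec c hcC).1⟩
  have hmain := Finset.card_le_mul_card_image_of_maps_to hmaps (a + 2) hfib
  rw [← Set.ncard_eq_toFinset_card C hCfin, ← Set.ncard_eq_toFinset_card _ hLpfin,
    hpoint p] at hmain
  exact hmain
end

section
/- Let A be a maximal arc of degree d in a projective plane P of order q = dd', where 2 ≤ d < q. Let the points of an incidence structure G be the points of P not in A, and let the lines of G be the lines of P that meet A (each restricted to its points outside A). Then G is a partial geometry pg(s,t,α) with parameters s = q − d = d(d'−1), t = q(d−1)/d = d'(d−1), α = (q−d)(d−1)/d = (d−1)(d'−1). -/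
/-- A (finite) projective plane of order `q`: any two distinct points are on
exactly one common line, any two distinct lines meet in exactly one point,
every line has exactly `q+1` points and every point is on exactly `q+1`
lines. -/
def IsProjectivePlane {X Λ : Type*} (I : X → Λ → Prop) (q : ℕ) : Prop :=
  Finite X ∧ Finite Λ ∧
  (∀ x y : X, x ≠ y → {l : Λ | I x l ∧ I y l}.ncard = 1) ∧
  (∀ l m : Λ, l ≠ m → {x : X | I x l ∧ I x m}.ncard = 1) ∧
  (∀ l : Λ, {x : X | I x l}.ncard = q + 1) ∧
  (∀ x : X, {l : Λ | I x l}.ncard = q + 1)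

/-- A maximal arc of degree `d` in a projective plane of order `q`: a set `A`
of `dq - q + d` points such that every line is either disjoint from `A` or
meets `A` in exactly `d` points. -/
def IsMaximalArc {X Λ : Type*} (I : X → Λ → Prop) (q d : ℕ) (A : Set X) : Prop :=
  A.ncard = d * q - q + d ∧
  ∀ l : Λ, (∀ x ∈ A, ¬ I x l) ∨ {x ∈ A | I x l}.ncard = d

/-- Points of the Thas–Wallis partial geometry arising from a maximal arc `A`:
the points of the plane not in `A`. -/
abbrev TWpoints {X : Type*} (A : Set X) : Type _ := {x : X // x ∉ A}

/-- Lines of the Thas–Wallis partial geometry arising from a maximal arc `A`: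
the lines of the plane meeting `A`. -/
abbrev TWlines {X Λ : Type*} (I : X → Λ → Prop) (A : Set X) : Type _ :=
  {l : Λ // ∃ x ∈ A, I x l}

/-- Incidence in the Thas–Wallis partial geometry: inherited from the plane. -/
abbrev TWinc {X Λ : Type*} (I : X → Λ → Prop) (A : Set X) :
    TWpoints A → TWlines I A → Prop :=
  fun p l => I p.1 l.1

private lemma TW_ncard_filter {α : Type*} [Fintype α] (P : α → Prop) [DecidablePred P] :
    {x | P x}.ncard = (Finset.univ.filter P).card := by
  rw [Set.ncard_eq_toFinset_card']; simp

section TW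
variable {X Λ : Type*} {I : X → Λ → Prop} {q d d' : ℕ} {A : Set X}

private lemma TW_secant_count (hP : IsProjectivePlane I q) (hq : q = d * d')
    (hd : 2 ≤ d) (hA : IsMaximalArc I q d A) {p : X} (hp : p ∉ A) :
    {l : Λ | I p l ∧ ∃ x ∈ A, I x l}.ncard = (d - 1) * d' + 1 := by
  classical
  obtain ⟨hX, hΛ, hpt, hln, hlc, hpc⟩ := hP
  obtain ⟨hAcard, hAl⟩ := hA
  haveI := Fintype.ofFinite X
  haveI := Fintype.ofFinite Λ
  have join : ∀ x y : X, x ≠ y →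
      ∃ l, (I x l ∧ I y l) ∧ ∀ m, I x m → I y m → m = l := by
    intro x y hxy
    obtain ⟨l, hl⟩ := Set.ncard_eq_one.mp (hpt x y hxy)
    refine ⟨l, ?_, fun m h1 h2 => ?_⟩
    · have : l ∈ ({l} : Set Λ) := rfl
      rw [← hl] at this; exact this
    · have : m ∈ {m : Λ | I x m ∧ I y m} := ⟨h1, h2⟩
      rw [hl] at this; exact this
  set Lp : Finset Λ := Finset.univ.filter (fun l => I p l) with hLpdef
  have hLp : Lp.card = q + 1 := by rw [← TW_ncard_filter]; exact hpc p
  have hcover : A.toFinset = Lp.biUnion (fun l => A.toFinset.filter (fun x => I x l)) := by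
    ext a
    simp only [Finset.mem_biUnion, Finset.mem_filter, Set.mem_toFinset, hLpdef,
      Finset.mem_univ, true_and]
    constructor
    · intro ha
      have hap : a ≠ p := fun h => hp (h ▸ ha)
      obtain ⟨l, ⟨hal, hpl⟩, _⟩ := join a p hap
      exact ⟨l, hpl, ha, hal⟩
    · rintro ⟨l, _, ha, _⟩; exact ha
  have hdisj : ∀ l ∈ Lp, ∀ l' ∈ Lp, l ≠ l' →
      Disjoint (A.toFinset.filter (fun x => I x l)) (A.toFinset.filter (fun x => I x l')) := by
    intro l hl l' hl' hne
    rw [Finset.disjoint_left]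
    rintro x hx hx'
    simp only [Finset.mem_filter, Set.mem_toFinset] at hx hx'
    simp only [hLpdef, Finset.mem_filter, Finset.mem_univ, true_and] at hl hl'
    have hxp : x ≠ p := fun h => hp (h ▸ hx.1)
    obtain ⟨m, _, hm⟩ := join x p hxp
    exact hne ((hm l hx.2 hl).trans (hm l' hx'.2 hl').symm)
  have hsum : A.toFinset.card = ∑ l ∈ Lp, (A.toFinset.filter (fun x => I x l)).card := by
    conv_lhs => rw [hcover]
    exact Finset.card_biUnion hdisj
  have hper : ∀ l ∈ Lp, (A.toFinset.filter (fun x => I x l)).card =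
      if (∃ x ∈ A, I x l) then d else 0 := by
    intro l _
    by_cases hsec : ∃ x ∈ A, I x l
    · rw [if_pos hsec]
      rcases hAl l with h | h
      · obtain ⟨x, hx1, hx2⟩ := hsec; exact absurd hx2 (h x hx1)
      · rw [← h, Set.ncard_eq_toFinset_card']
        congr 1
        ext x; simp [Set.mem_sep_iff]
    · rw [if_neg hsec, Finset.card_eq_zero, Finset.filter_eq_empty_iff]
      intro x hx hxl
      exact hsec ⟨x, Set.mem_toFinset.mp hx, hxl⟩
  have hsum2 : A.toFinset.card = (Lp.filter (fun l => ∃ x ∈ A, I x l)).card * d := by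
    rw [hsum, Finset.sum_congr rfl hper, Finset.sum_ite, Finset.sum_const,
      Finset.sum_const, smul_eq_mul, smul_eq_mul, mul_zero, add_zero]
  have hAc : A.toFinset.card = d * q - q + d := by
    rw [← Set.ncard_eq_toFinset_card']; exact hAcard
  obtain ⟨e, rfl⟩ : ∃ e, d = e + 1 := ⟨d - 1, by omega⟩
  have key : (Lp.filter (fun l => ∃ x ∈ A, I x l)).card * (e + 1)
      = (e * d' + 1) * (e + 1) := by
    rw [← hsum2, hAc, hq]
    have h1 : (e+1) * ((e+1) * d') = e * ((e+1) * d') + (e+1) * d' := by ring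
    rw [h1, Nat.add_sub_cancel]
    ring
  have hScard : (Lp.filter (fun l => ∃ x ∈ A, I x l)).card = e * d' + 1 :=
    Nat.eq_of_mul_eq_mul_right (by omega) key
  rw [TW_ncard_filter]
  simp only [Nat.add_sub_cancel]
  rw [← hScard, hLpdef, Finset.filter_filter]

private lemma TW_line_count (hP : IsProjectivePlane I q)
    (hA : IsMaximalArc I q d A) {l : Λ} (hl : ∃ x ∈ A, I x l) :
    {x : X | I x l ∧ x ∉ A}.ncard = q + 1 - d := by
  classical
  obtain ⟨hX, hΛ, hpt, hln, hlc, hpc⟩ := hP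
  obtain ⟨hAcard, hAl⟩ := hA
  haveI := Fintype.ofFinite X
  haveI := Fintype.ofFinite Λ
  have htot : (Finset.univ.filter (fun x => I x l)).card = q + 1 := by
    rw [← TW_ncard_filter]; exact hlc l
  have hd' : ((Finset.univ.filter (fun x => I x l)).filter (fun x => x ∈ A)).card = d := by
    rcases hAl l with h | h
    · obtain ⟨x, hx1, hx2⟩ := hl; exact absurd hx2 (h x hx1)
    · rw [← h, Set.ncard_eq_toFinset_card']
      congr 1
      ext x; simp [Set.mem_sep_iff, and_comm]
  have hsplit := Finset.card_filter_add_card_filter_not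
    (s := Finset.univ.filter (fun x => I x l)) (p := fun x => x ∈ A)
  rw [TW_ncard_filter]
  have heq : Finset.univ.filter (fun x => I x l ∧ x ∉ A)
      = (Finset.univ.filter (fun x => I x l)).filter (fun x => ¬ x ∈ A) := by
    rw [Finset.filter_filter]
  rw [heq]
  omega
end TW

section TW2
variable {X Λ : Type*} {I : X → Λ → Prop} {q d d' : ℕ} {A : Set X}

private lemma TW_alpha_count (hP : IsProjectivePlane I q) (hq : q = d * d')
    (hd : 2 ≤ d) (hdq : d < q) (hA : IsMaximalArc I q d A) {p : X} (hp : p ∉ A)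
    {l0 : Λ} (hl0 : ∃ x ∈ A, I x l0) (hpl0 : ¬ I p l0) :
    {m : Λ | I p m ∧ ((∃ x, x ∉ A ∧ I x m ∧ I x l0) ∧ ∃ x ∈ A, I x m)}.ncard
      = (d - 1) * (d' - 1) := by
  classical
  have hsec := TW_secant_count hP hq hd hA hp
  have hout := TW_line_count hP hA hl0
  obtain ⟨hX, hΛ, hpt, hln, hlc, hpc⟩ := hP
  haveI := Fintype.ofFinite X
  haveI := Fintype.ofFinite Λ
  have join : ∀ x y : X, x ≠ y →
      ∃ l, (I x l ∧ I y l) ∧ ∀ m, I x m → I y m → m = l := by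
    intro x y hxy
    obtain ⟨l, hl⟩ := Set.ncard_eq_one.mp (hpt x y hxy)
    refine ⟨l, ?_, fun m h1 h2 => ?_⟩
    · have : l ∈ ({l} : Set Λ) := rfl
      rw [← hl] at this; exact this
    · have : m ∈ {m : Λ | I x m ∧ I y m} := ⟨h1, h2⟩
      rw [hl] at this; exact this
  have meet : ∀ m : Λ, m ≠ l0 →
      ∃ x, (I x m ∧ I x l0) ∧ ∀ y, I y m → I y l0 → y = x := by
    intro m hm
    obtain ⟨x, hx⟩ := Set.ncard_eq_one.mp (hln m l0 hm)
    refine ⟨x, ?_, fun y h1 h2 => ?_⟩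
    · have : x ∈ ({x} : Set X) := rfl
      rw [← hx] at this; exact this
    · have : y ∈ {y : X | I y m ∧ I y l0} := ⟨h1, h2⟩
      rw [hx] at this; exact this
  set Mp : Finset Λ := Finset.univ.filter (fun m => I p m) with hMpdef
  have hMp : Mp.card = q + 1 := by rw [← TW_ncard_filter]; exact hpc p
  set B : Finset Λ := Mp.filter (fun m => ∃ x, x ∉ A ∧ I x m ∧ I x l0) with hBdef
  set S : Finset Λ := Mp.filter (fun m => ∃ x ∈ A, I x m) with hSdef
  set E : Finset Λ := Mp.filter (fun m => ¬ ∃ x ∈ A, I x m) with hEdef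
  -- every line through p is ≠ l0
  have hne : ∀ m ∈ Mp, m ≠ l0 := by
    intro m hm h
    simp only [hMpdef, Finset.mem_filter, Finset.mem_univ, true_and] at hm
    exact hpl0 (h ▸ hm)
  -- |B| = q + 1 - d via bijection with points of l0 outside A
  have hBcard : B.card = q + 1 - d := by
    have := Finset.card_bij
      (s := B) (t := Finset.univ.filter (fun x => I x l0 ∧ x ∉ A))
      (i := fun m hm => (meet m (hne m (Finset.mem_filter.mp hm).1)).choose)
      (hi := ?_) (i_inj := ?_) (i_surj := ?_)
    · rw [this, ← TW_ncard_filter]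
      exact hout
    · -- maps into target
      intro m hm
      have hm' := Finset.mem_filter.mp hm
      obtain ⟨x, hxA, hxm, hxl0⟩ := hm'.2
      have hspec := (meet m (hne m hm'.1)).choose_spec
      have hx : x = (meet m (hne m hm'.1)).choose := hspec.2 x hxm hxl0
      simp only [Finset.mem_filter, Finset.mem_univ, true_and]
      exact ⟨hspec.1.2, hx ▸ hxA⟩
    · -- injective
      intro m1 hm1 m2 hm2 hF
      have h1 := Finset.mem_filter.mp hm1
      have h2 := Finset.mem_filter.mp hm2
      have hs1 := (meet m1 (hne m1 h1.1)).choose_spec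
      have hs2 := (meet m2 (hne m2 h2.1)).choose_spec
      set x := (meet m1 (hne m1 h1.1)).choose
      have hxl0 : I x l0 := hs1.1.2
      have hxp : x ≠ p := fun h => hpl0 (h ▸ hxl0)
      obtain ⟨n, _, hn⟩ := join x p hxp
      have hpm1 : I p m1 := (Finset.mem_filter.mp h1.1).2
      have hpm2 : I p m2 := (Finset.mem_filter.mp h2.1).2
      have e1 : m1 = n := hn m1 hs1.1.1 hpm1
      have hF2 : x = (meet m2 (hne m2 h2.1)).choose := hF
      have e2 : m2 = n := hn m2 (hF2 ▸ hs2.1.1) hpm2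
      exact e1.trans e2.symm
    · -- surjective
      intro x hx
      simp only [Finset.mem_filter, Finset.mem_univ, true_and] at hx
      have hxp : x ≠ p := fun h => hpl0 (h ▸ hx.1)
      obtain ⟨m, ⟨hxm, hpm⟩, _⟩ := join x p hxp
      have hmMp : m ∈ Mp := by
        simp only [hMpdef, Finset.mem_filter, Finset.mem_univ, true_and]; exact hpm
      have hmB : m ∈ B := by
        rw [hBdef, Finset.mem_filter]
        exact ⟨hmMp, x, hx.2, hxm, hx.1⟩
      refine ⟨m, hmB, ?_⟩
      have hspec := (meet m (hne m (Finset.mem_filter.mp hmB).1)).choose_spec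
      exact (hspec.2 x hxm hx.1).symm
  -- |S| = (d-1)d' + 1
  have hScard : S.card = (d - 1) * d' + 1 := by
    rw [← hsec, TW_ncard_filter, hSdef, hMpdef, Finset.filter_filter]
  -- |E| = q + 1 - ((d-1)d' + 1)
  have hEcard : E.card = q + 1 - ((d - 1) * d' + 1) := by
    have hsplit := Finset.card_filter_add_card_filter_not
      (s := Mp) (p := fun m => ∃ x ∈ A, I x m)
    rw [← hSdef, ← hEdef] at hsplit
    rw [← hMp, ← hScard]
    omega
  -- E ⊆ B
  have hEB : E ⊆ B := by
    intro m hm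
    rw [hEdef, Finset.mem_filter] at hm
    have hspec := (meet m (hne m hm.1)).choose_spec
    rw [hBdef, Finset.mem_filter]
    refine ⟨hm.1, (meet m (hne m hm.1)).choose, ?_, hspec.1.1, hspec.1.2⟩
    intro hmem
    exact hm.2 ⟨_, hmem, hspec.1.1⟩
  -- target = B.filter secant, and B.filter (non-secant) = E
  have hBE : B.filter (fun m => ¬ ∃ x ∈ A, I x m) = E := by
    apply Finset.Subset.antisymm
    · intro m hm
      rw [Finset.mem_filter] at hm
      rw [hEdef, Finset.mem_filter]
      exact ⟨(Finset.mem_filter.mp hm.1).1, hm.2⟩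
    · intro m hm
      rw [Finset.mem_filter]
      refine ⟨hEB hm, ?_⟩
      rw [hEdef, Finset.mem_filter] at hm
      exact hm.2
  have hsplitB := Finset.card_filter_add_card_filter_not
    (s := B) (p := fun m => ∃ x ∈ A, I x m)
  rw [hBE] at hsplitB
  -- identify the target set with this filter
  have hset : {m : Λ | I p m ∧ ((∃ x, x ∉ A ∧ I x m ∧ I x l0) ∧ ∃ x ∈ A, I x m)}.ncard
      = (B.filter (fun m => ∃ x ∈ A, I x m)).card := by
    rw [TW_ncard_filter, hBdef, hMpdef, Finset.filter_filter, Finset.filter_filter]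
  rw [hset]
  -- arithmetic
  have hd'pos : 1 ≤ d' := by
    rcases Nat.eq_zero_or_pos d' with h | h
    · exfalso; rw [h, Nat.mul_zero] at hq; omega
    · exact h
  obtain ⟨e, rfl⟩ : ∃ e, d = e + 1 := ⟨d - 1, by omega⟩
  obtain ⟨f, rfl⟩ : ∃ f, d' = f + 1 := ⟨d' - 1, by omega⟩
  simp only [Nat.add_sub_cancel] at hBcard hEcard hsplitB ⊢
  rw [hq] at hBcard hEcard
  have h1 : (e + 1) * (f + 1) = e * f + e + f + 1 := by ring
  have h2 : e * (f + 1) = e * f + e := by ring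
  rw [h1] at hBcard hEcard
  rw [h2] at hEcard
  set a := e * f with ha
  omega
end TW2

/-- Thas–Wallis construction: if `A` is a maximal arc of degree `d` in a
projective plane of order `q = dd'` with `2 ≤ d < q`, then the incidence
structure whose points are the points of the plane outside `A` and whose lines
are the lines of the plane meeting `A` (restricted to points outside `A`) is a
partial geometry with parameters `s = q - d = d(d'-1)`,
`t = q(d-1)/d = d'(d-1)`, `α = (q-d)(d-1)/d = (d-1)(d'-1)`. -/
theorem stmt6 {X Λ : Type*} {I : X → Λ → Prop} {q d d' : ℕ}
    (hP : IsProjectivePlane I q) (hq : q = d * d') (hd : 2 ≤ d) (hdq : d < q)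
    {A : Set X} (hA : IsMaximalArc I q d A) :
    IsPartialGeometry (TWinc I A) (q - d) (q * (d - 1) / d) ((q - d) * (d - 1) / d) ∧
    q - d = d * (d' - 1) ∧
    q * (d - 1) / d = d' * (d - 1) ∧
    (q - d) * (d - 1) / d = (d - 1) * (d' - 1) := by
  unfold IsPartialGeometry
  classical
  haveI hXf : Finite X := hP.1
  haveI hΛf : Finite Λ := hP.2.1
  have hd' : 2 ≤ d' := by
    rcases Nat.lt_or_ge d' 2 with h | h
    · exfalso
      have hle : q ≤ d := by
        rw [hq]
        calc d * d' ≤ d * 1 := Nat.mul_le_mul_left d (by omega)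
          _ = d := by ring
      omega
    · exact h
  have hs : q - d = d * (d' - 1) := by
    obtain ⟨f, rfl⟩ : ∃ f, d' = f + 1 := ⟨d' - 1, by omega⟩
    simp only [Nat.add_sub_cancel]
    rw [hq]
    have h1 : d * (f + 1) = d * f + d := by ring
    rw [h1, Nat.add_sub_cancel]
  have ht : q * (d - 1) / d = d' * (d - 1) := by
    rw [hq]
    have h1 : d * d' * (d - 1) = d * (d' * (d - 1)) := by ring
    rw [h1, Nat.mul_div_cancel_left _ (show 0 < d by omega)]
  have hal : (q - d) * (d - 1) / d = (d - 1) * (d' - 1) := by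
    rw [hs]
    have h1 : d * (d' - 1) * (d - 1) = d * ((d - 1) * (d' - 1)) := by ring
    rw [h1, Nat.mul_div_cancel_left _ (show 0 < d by omega)]
  refine ⟨⟨?_, ?_, ?_, ?_, ?_, ?_, ?_, ?_, ?_⟩, hs, ht, hal⟩
  · infer_instance
  · infer_instance
  · omega
  · rw [ht]
    have := Nat.mul_le_mul (show 1 ≤ d' by omega) (show 1 ≤ d - 1 by omega)
    omega
  · rw [hal]
    have := Nat.mul_le_mul (show 1 ≤ d - 1 by omega) (show 1 ≤ d' - 1 by omega)
    omega
  · intro p r hpr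
    have h1 : {l : Λ | I p.1 l ∧ I r.1 l}.ncard = 1 :=
      hP.2.2.1 p.1 r.1 (fun h => hpr (Subtype.ext h))
    have hsub : Subtype.val '' {l : TWlines I A | TWinc I A p l ∧ TWinc I A r l}
        ⊆ {l : Λ | I p.1 l ∧ I r.1 l} := by
      rintro l ⟨m, hm, rfl⟩; exact hm
    have h2 := Set.ncard_le_ncard hsub (Set.toFinite _)
    rw [Set.ncard_image_of_injective _ Subtype.val_injective] at h2
    omega
  · intro l
    have himg : Subtype.val '' {p : TWpoints A | TWinc I A p l} = {x : X | I x l.1 ∧ x ∉ A} := by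
      ext x
      simp only [Set.mem_image, Set.mem_setOf_eq]
      constructor
      · rintro ⟨⟨y, hy⟩, hI, rfl⟩; exact ⟨hI, hy⟩
      · rintro ⟨hI, hx⟩; exact ⟨⟨x, hx⟩, hI, rfl⟩
    rw [← Set.ncard_image_of_injective _ Subtype.val_injective, himg,
      TW_line_count hP hA l.2]
    omega
  · intro p
    have himg : Subtype.val '' {m : TWlines I A | TWinc I A p m}
        = {m : Λ | I p.1 m ∧ ∃ x ∈ A, I x m} := by
      ext m
      simp only [Set.mem_image, Set.mem_setOf_eq]
      constructor
      · rintro ⟨⟨n, hn⟩, hI, rfl⟩; exact ⟨hI, hn⟩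
      · rintro ⟨hI, hn⟩; exact ⟨⟨m, hn⟩, hI, rfl⟩
    rw [← Set.ncard_image_of_injective _ Subtype.val_injective, himg,
      TW_secant_count hP hq hd hA p.2, ht, Nat.mul_comm]
  · intro p l hnI
    have himg : Subtype.val '' {m : TWlines I A | TWinc I A p m ∧
          ∃ r : TWpoints A, TWinc I A r m ∧ TWinc I A r l}
        = {m : Λ | I p.1 m ∧ ((∃ x, x ∉ A ∧ I x m ∧ I x l.1) ∧ ∃ x ∈ A, I x m)} := by
      ext m
      simp only [Set.mem_image, Set.mem_setOf_eq]
      constructor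
      · rintro ⟨⟨n, hn⟩, ⟨hI, ⟨x, hx⟩, hxm, hxl⟩, rfl⟩
        exact ⟨hI, ⟨x, hx, hxm, hxl⟩, hn⟩
      · rintro ⟨hI, ⟨x, hx, hxm, hxl⟩, hn⟩
        exact ⟨⟨m, hn⟩, ⟨hI, ⟨x, hx⟩, hxm, hxl⟩, rfl⟩
    rw [← Set.ncard_image_of_injective _ Subtype.val_injective, himg,
      TW_alpha_count hP hq hd hdq hA p.2 l.2 hnI, hal]
end

section
/- Let A be a maximal arc of degree d in a projective plane P of order q = dd', with 2 ≤ d < q, and let G be the partial geometry arising from A via the Thas–Wallis construction. For every point x ∈ A, the restrictions to the complement of A of the q+1 lines of P through x form a parallel class of lines of G; moreover, the d(dd'−d'+1) parallel classes of G obtained in this way from the points of A are pairwise distinct and pairwise orthogonal. In particular, G admits a set of d(dd'−d'+1) pairwise orthogonal parallel classes. -/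
/-- For a maximal arc `A` of degree `d` in a projective plane of order
`q = dd'` (`2 ≤ d < q`) and the Thas–Wallis partial geometry `G` arising from
`A`: for every point `x ∈ A`, the restrictions of the lines of the plane
through `x` form a parallel class of `G`; the parallel classes obtained from
distinct points of `A` are distinct and pairwise orthogonal; and the set of
parallel classes so obtained has exactly `d(dd' - d' + 1)` elements. -/
theorem stmt7 {X Λ : Type*} {I : X → Λ → Prop} {q d d' : ℕ}
    (hP : IsProjectivePlane I q) (hq : q = d * d') (hd : 2 ≤ d) (hdq : d < q)
    {A : Set X} (hA : IsMaximalArc I q d A) :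
    (∀ x ∈ A, IsParallelClass (TWinc I A) {l : TWlines I A | I x l.1}) ∧
    (∀ x ∈ A, ∀ y ∈ A, x ≠ y →
      {l : TWlines I A | I x l.1} ≠ {l : TWlines I A | I y l.1}) ∧
    (∀ x ∈ A, ∀ y ∈ A, x ≠ y →
      ({l : TWlines I A | I x l.1} ∩ {l : TWlines I A | I y l.1}).ncard = 1) ∧
    {c : Set (TWlines I A) | ∃ x ∈ A, c = {l : TWlines I A | I x l.1}}.ncard
      = d * (d * d' - d' + 1) := by

  obtain ⟨hXfin, hLfin, hpt2, hln2, hlcard, hpcard⟩ := hP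
  have hq3 : 3 ≤ q := by omega
  -- unique line through two distinct points
  have key : ∀ x y : X, x ≠ y → ∃ l : Λ, {l : Λ | I x l ∧ I y l} = {l} := by
    intro x y hxy
    exact Set.ncard_eq_one.mp (hpt2 x y hxy)
  -- distinct lines meet in at most one point
  have meet : ∀ l m : Λ, l ≠ m → ∀ x y : X, x ≠ y →
      ¬ (I x l ∧ I x m ∧ I y l ∧ I y m) := by
    intro l m hlm x y hxy ⟨h1, h2, h3, h4⟩
    obtain ⟨z, hz⟩ := Set.ncard_eq_one.mp (hln2 l m hlm)
    have hx : x ∈ {x : X | I x l ∧ I x m} := ⟨h1, h2⟩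
    have hy : y ∈ {x : X | I x l ∧ I x m} := ⟨h3, h4⟩
    rw [hz] at hx hy
    exact hxy (hx.trans hy.symm)
  -- Part 1 : parallel classes
  have part1 : ∀ x ∈ A, IsParallelClass (TWinc I A) {l : TWlines I A | I x l.1} := by
    intro x hx
    constructor
    · intro p
      have hxp : x ≠ p.1 := fun h => p.2 (h ▸ hx)
      obtain ⟨l, hl⟩ := key x p.1 hxp
      have hmem : l ∈ {l : Λ | I x l ∧ I p.1 l} := by rw [hl]; rfl
      exact ⟨⟨l, x, hx, hmem.1⟩, hmem.1, hmem.2⟩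
    · intro l hl m hm hne p ⟨hpl, hpm⟩
      have hl1 : l.1 ≠ m.1 := fun h => hne (Subtype.ext h)
      have hxp : x ≠ p.1 := fun h => p.2 (h ▸ hx)
      exact meet l.1 m.1 hl1 x p.1 hxp ⟨hl, hm, hpl, hpm⟩
  -- Part 2 : distinctness
  have part2 : ∀ x ∈ A, ∀ y ∈ A, x ≠ y →
      {l : TWlines I A | I x l.1} ≠ {l : TWlines I A | I y l.1} := by
    intro x hx y hy hxy heq
    have hsub : {l : Λ | I x l} ⊆ {l : Λ | I x l ∧ I y l} := by
      intro l hl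
      have : (⟨l, x, hx, hl⟩ : TWlines I A) ∈ {l : TWlines I A | I x l.1} := hl
      rw [heq] at this
      exact ⟨hl, this⟩
    have h1 : ({l : Λ | I x l}).ncard ≤ ({l : Λ | I x l ∧ I y l}).ncard :=
      Set.ncard_le_ncard hsub (Set.toFinite _)
    rw [hpcard x, hpt2 x y hxy] at h1
    omega
  -- Part 3 : orthogonality
  have part3 : ∀ x ∈ A, ∀ y ∈ A, x ≠ y →
      ({l : TWlines I A | I x l.1} ∩ {l : TWlines I A | I y l.1}).ncard = 1 := by
    intro x hx y hy hxy
    obtain ⟨l₀, hl₀⟩ := key x y hxy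
    have hmem : l₀ ∈ {l : Λ | I x l ∧ I y l} := by rw [hl₀]; rfl
    have hTW : ∃ z ∈ A, I z l₀ := ⟨x, hx, hmem.1⟩
    have hset : ({l : TWlines I A | I x l.1} ∩ {l : TWlines I A | I y l.1})
        = {(⟨l₀, hTW⟩ : TWlines I A)} := by
      ext m
      constructor
      · intro ⟨h1, h2⟩
        have : m.1 ∈ {l : Λ | I x l ∧ I y l} := ⟨h1, h2⟩
        rw [hl₀] at this
        exact Subtype.ext this
      · intro h
        rw [h]
        exact ⟨hmem.1, hmem.2⟩
    rw [hset, Set.ncard_singleton]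
  refine ⟨part1, part2, part3, ?_⟩
  -- Part 4 : counting
  have himg : {c : Set (TWlines I A) | ∃ x ∈ A, c = {l : TWlines I A | I x l.1}}
      = (fun x : X => {l : TWlines I A | I x l.1}) '' A := by
    ext c
    simp only [Set.mem_setOf_eq, Set.mem_image]
    constructor
    · rintro ⟨x, hx, rfl⟩; exact ⟨x, hx, rfl⟩
    · rintro ⟨x, hx, rfl⟩; exact ⟨x, hx, rfl⟩
  have hinj : Set.InjOn (fun x : X => {l : TWlines I A | I x l.1}) A := by
    intro x hx y hy heq
    by_contra hxy
    exact part2 x hx y hy hxy heq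
  rw [himg, Set.ncard_image_of_injOn hinj, hA.1, hq]
  obtain ⟨k, rfl⟩ : ∃ k, d = k + 2 := ⟨d - 2, by omega⟩
  have e1 : (k+2)*d' - d' = (k+1)*d' := by
    have : (k+2)*d' = (k+1)*d' + d' := by ring
    omega
  rw [e1]
  rw [show (k+2)*((k+2)*d') = (k+2)*((k+1)*d') + (k+2)*d' from by ring,
    Nat.add_sub_cancel]
  ring
end

section
/- Let A be a maximal arc of degree d in a projective plane P of order q = dd', with 2 ≤ d < q, let G be the partial geometry arising from A via the Thas–Wallis construction, and let G' be the dual geometry of G. For every line l of P disjoint from A, the q+1 points of l (all of which are points of G, and hence lines of G') form a parallel class of lines of G'; moreover, the d'(dd'−d+1) parallel classes of G' obtained in this way from the lines of P disjoint from A are pairwise distinct and pairwise orthogonal. In particular, G' admits a set of d'(dd'−d+1) pairwise orthogonal parallel classes. -/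
open Finset in
lemma fiber_count {X L : Type*} {S : Set X} {T : Set L} (hS : S.Finite) (hT : T.Finite)
    (f : X → L) (hf : ∀ x ∈ S, f x ∈ T) :
    S.ncard = ∑ l ∈ hT.toFinset, {x ∈ S | f x = l}.ncard := by
  classical
  rw [Set.ncard_eq_toFinset_card _ hS]
  rw [Finset.card_eq_sum_card_fiberwise (f := f) (t := hT.toFinset)
    (fun x hx => hT.mem_toFinset.mpr (hf x (hS.mem_toFinset.mp hx)))]
  refine Finset.sum_congr rfl fun l _ => ?_
  rw [← Set.ncard_coe_finset]
  congr 1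
  ext x
  simp [Set.mem_setOf_eq, and_comm]

lemma double_count {X L : Type*} {S : Set X} {T : Set L} (hS : S.Finite) (hT : T.Finite)
    (R : X → L → Prop) :
    ∑ x ∈ hS.toFinset, {l ∈ T | R x l}.ncard = ∑ l ∈ hT.toFinset, {x ∈ S | R x l}.ncard := by
  classical
  have h1 : ∀ x, {l ∈ T | R x l}.ncard = (hT.toFinset.filter (fun l => R x l)).card := by
    intro x; rw [← Set.ncard_coe_finset]; congr 1; ext l; simp
  have h2 : ∀ l, {x ∈ S | R x l}.ncard = (hS.toFinset.filter (fun x => R x l)).card := by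
    intro l; rw [← Set.ncard_coe_finset]; congr 1; ext x; simp
  simp_rw [h1, h2, Finset.card_filter]
  exact Finset.sum_comm

/-- For a maximal arc `A` of degree `d` in a projective plane of order
`q = dd'` (`2 ≤ d < q`), the Thas–Wallis partial geometry `G` arising from `A`
and its dual geometry `G'` (whose lines are the points of `G`): for every line
`l₀` of the plane disjoint from `A`, the points of `l₀` (all of which are
points of `G`, hence lines of `G'`) form a parallel class of `G'`; the parallel
classes obtained from distinct lines disjoint from `A` are distinct and
pairwise orthogonal; and the set of parallel classes so obtained has exactly
`d'(dd' - d + 1)` elements. -/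
theorem stmt8 {X Λ : Type*} {I : X → Λ → Prop} {q d d' : ℕ}
    (hP : IsProjectivePlane I q) (hq : q = d * d') (hd : 2 ≤ d) (hdq : d < q)
    {A : Set X} (hA : IsMaximalArc I q d A) :
    (∀ l₀ : Λ, (∀ x ∈ A, ¬ I x l₀) →
      IsParallelClass (fun (l : TWlines I A) (p : TWpoints A) => TWinc I A p l)
        {p : TWpoints A | I p.1 l₀}) ∧
    (∀ l₀ m₀ : Λ, (∀ x ∈ A, ¬ I x l₀) → (∀ x ∈ A, ¬ I x m₀) → l₀ ≠ m₀ →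
      {p : TWpoints A | I p.1 l₀} ≠ {p : TWpoints A | I p.1 m₀}) ∧
    (∀ l₀ m₀ : Λ, (∀ x ∈ A, ¬ I x l₀) → (∀ x ∈ A, ¬ I x m₀) → l₀ ≠ m₀ →
      ({p : TWpoints A | I p.1 l₀} ∩ {p : TWpoints A | I p.1 m₀}).ncard = 1) ∧
    {c : Set (TWpoints A) |
        ∃ l₀ : Λ, (∀ x ∈ A, ¬ I x l₀) ∧ c = {p : TWpoints A | I p.1 l₀}}.ncard
      = d' * (d * d' - d + 1) := by
  
  classical
  obtain ⟨hXfin, hΛfin, hpp, hll, hlpts, hplines⟩ := hP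
  obtain ⟨hAcard, hAlines⟩ := hA
  have hd'pos : 1 ≤ d' := by
    rcases Nat.eq_zero_or_pos d' with h | h
    · subst h; simp at hq; omega
    · exact h
  have hdq' : d ≤ q := le_of_lt hdq
  have hd'q : d' ≤ d * d' := Nat.le_mul_of_pos_left d' (by omega)
  -- unique line through two distinct points
  have line_unique : ∀ x y : X, x ≠ y → ∀ l m : Λ, I x l → I y l → I x m → I y m → l = m := by
    intro x y hxy l m h1 h2 h3 h4
    obtain ⟨c, hc⟩ := Set.ncard_eq_one.mp (hpp x y hxy)
    have e1 : l ∈ ({c} : Set Λ) := hc ▸ (⟨h1, h2⟩ : l ∈ {l' | I x l' ∧ I y l'})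
    have e2 : m ∈ ({c} : Set Λ) := hc ▸ (⟨h3, h4⟩ : m ∈ {l' | I x l' ∧ I y l'})
    rw [e1, e2]
  -- existence of common line / common point
  have joinline : ∀ x y : X, x ≠ y → ∃ l : Λ, I x l ∧ I y l := by
    intro x y h
    obtain ⟨c, hc⟩ := Set.ncard_eq_one.mp (hpp x y h)
    have : c ∈ {l : Λ | I x l ∧ I y l} := by rw [hc]; exact rfl
    exact ⟨c, this⟩
  have meet : ∀ l m : Λ, l ≠ m → ∃ x : X, I x l ∧ I x m := by
    intro l m h
    obtain ⟨c, hc⟩ := Set.ncard_eq_one.mp (hll l m h)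
    have : c ∈ {x : X | I x l ∧ I x m} := by rw [hc]; exact rfl
    exact ⟨c, this⟩
  -- Part 1
  have part1 : ∀ l₀ : Λ, (∀ x ∈ A, ¬ I x l₀) →
      IsParallelClass (fun (l : TWlines I A) (p : TWpoints A) => TWinc I A p l)
        {p : TWpoints A | I p.1 l₀} := by
    intro l₀ h0
    constructor
    · rintro ⟨l, a, ha, hal⟩
      have hne : l ≠ l₀ := by rintro rfl; exact h0 a ha hal
      obtain ⟨x, hx1, hx2⟩ := meet l l₀ hne
      exact ⟨⟨x, fun h => h0 x h hx2⟩, hx2, hx1⟩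
    · rintro p hp p' hp' hne ⟨l, a, ha, hal⟩ ⟨h1, h2⟩
      have hpp' : p.1 ≠ p'.1 := fun h => hne (Subtype.ext h)
      have hl : l = l₀ := line_unique p.1 p'.1 hpp' l l₀ h1 h2 hp hp'
      exact h0 a ha (hl ▸ hal)
  -- Part 2
  have part2 : ∀ l₀ m₀ : Λ, (∀ x ∈ A, ¬ I x l₀) → (∀ x ∈ A, ¬ I x m₀) → l₀ ≠ m₀ →
      {p : TWpoints A | I p.1 l₀} ≠ {p : TWpoints A | I p.1 m₀} := by
    intro l₀ m₀ h0 h1 hne heq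
    obtain ⟨x, hxl, hxm⟩ := meet l₀ m₀ hne
    have h2 : 2 ≤ ({x' : X | I x' l₀}).ncard := by rw [hlpts l₀]; omega
    obtain ⟨y, hy, hyx⟩ :=
      Set.exists_ne_of_one_lt_ncard (s := {x' : X | I x' l₀}) (by omega) x
    have hyA : y ∉ A := fun h => h0 y h hy
    have hyny : (⟨y, hyA⟩ : TWpoints A) ∈ {p : TWpoints A | I p.1 l₀} := hy
    rw [heq] at hyny
    exact hne (line_unique x y (Ne.symm hyx) l₀ m₀ hxl hy hxm hyny)
  -- Part 3
  have part3 : ∀ l₀ m₀ : Λ, (∀ x ∈ A, ¬ I x l₀) → (∀ x ∈ A, ¬ I x m₀) → l₀ ≠ m₀ →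
      ({p : TWpoints A | I p.1 l₀} ∩ {p : TWpoints A | I p.1 m₀}).ncard = 1 := by
    intro l₀ m₀ h0 h1 hne
    have key : Subtype.val '' ({p : TWpoints A | I p.1 l₀} ∩ {p : TWpoints A | I p.1 m₀})
        = {x : X | I x l₀ ∧ I x m₀} := by
      ext x
      constructor
      · rintro ⟨⟨y, hy⟩, ⟨hl, hm⟩, rfl⟩; exact ⟨hl, hm⟩
      · rintro ⟨hl, hm⟩; exact ⟨⟨x, fun h => h0 x h hl⟩, ⟨hl, hm⟩, rfl⟩
    rw [← hll l₀ m₀ hne, ← key, Set.ncard_image_of_injective _ Subtype.val_injective]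
  refine ⟨part1, part2, part3, ?_⟩
  -- Part 4: counting
  -- partition of a set avoiding x₀ by the lines through x₀
  have partition : ∀ (x₀ : X) (S : Set X), x₀ ∉ S →
      S.ncard = ∑ l ∈ (Set.toFinite {l : Λ | I x₀ l}).toFinset, {y ∈ S | I y l}.ncard := by
    intro x₀ S hx₀
    have hΛne : Nonempty Λ := by
      have h1 := hplines x₀
      have h2 : ({l : Λ | I x₀ l}).Nonempty := by
        rw [← Set.ncard_pos (Set.toFinite _)]; omega
      exact ⟨h2.choose⟩
    have hspec : ∀ y : X, ∃ l : Λ, y ≠ x₀ → I y l ∧ I x₀ l := by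
      intro y
      by_cases h : y = x₀
      · exact ⟨Classical.arbitrary Λ, fun h' => absurd h h'⟩
      · obtain ⟨l, hl⟩ := joinline y x₀ h
        exact ⟨l, fun _ => hl⟩
    choose f hf using hspec
    rw [fiber_count (Set.toFinite S) (Set.toFinite {l : Λ | I x₀ l}) f
      (fun y hy => (hf y (fun h => hx₀ (h ▸ hy))).2)]
    refine Finset.sum_congr rfl fun l hl => ?_
    have hl' : I x₀ l := by simpa using hl
    congr 1; ext y
    simp only [Set.mem_setOf_eq]
    constructor
    · rintro ⟨hyS, rfl⟩; exact ⟨hyS, (hf y (fun h => hx₀ (h ▸ hyS))).1⟩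
    · rintro ⟨hyS, hyl⟩
      have hyx : y ≠ x₀ := fun h => hx₀ (h ▸ hyS)
      exact ⟨hyS, line_unique y x₀ hyx (f y) l (hf y hyx).1 (hf y hyx).2 hyl hl'⟩
  -- a point of A
  have hApos : 0 < A.ncard := by
    rw [hAcard]; omega
  obtain ⟨a₀, ha₀⟩ := (Set.ncard_pos (Set.toFinite A)).mp hApos
  -- every line through a₀ has q+1-d points outside A
  have houtside : ∀ l : Λ, I a₀ l → {y ∈ Aᶜ | I y l}.ncard = q + 1 - d := by
    intro l hl
    have hmeet : {x ∈ A | I x l}.ncard = d := by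
      rcases hAlines l with h' | h'
      · exact absurd hl (h' a₀ ha₀)
      · exact h'
    have hsplit : {x : X | I x l} = {x ∈ A | I x l} ∪ {y ∈ Aᶜ | I y l} := by
      ext x; by_cases hx : x ∈ A <;> simp [hx]
    have hdisj : Disjoint {x ∈ A | I x l} {y ∈ Aᶜ | I y l} := by
      rw [Set.disjoint_left]; rintro x ⟨h1, _⟩ ⟨h2, _⟩; exact h2 h1
    have htot := hlpts l
    rw [hsplit, Set.ncard_union_eq hdisj (Set.toFinite _) (Set.toFinite _), hmeet] at htot
    omega
  -- number of points outside A
  have hAc : Aᶜ.ncard = (q + 1) * (q + 1 - d) := by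
    rw [partition a₀ Aᶜ (by simpa using ha₀)]
    rw [Finset.sum_congr rfl (fun l hl => houtside l (by simpa using hl))]
    rw [Finset.sum_const, smul_eq_mul]
    congr 1
    rw [← Set.ncard_eq_toFinset_card _ (Set.toFinite _), hplines a₀]
  -- |A| rewritten
  have hAcard' : A.ncard = (d * d' - d' + 1) * d := by
    rw [hAcard, hq, Nat.add_mul, one_mul, Nat.sub_mul, Nat.mul_comm d' d,
      Nat.mul_comm (d * d') d]
  -- the set of lines disjoint from A
  set Ldisj : Set Λ := {l : Λ | ∀ a ∈ A, ¬ I a l} with hLdisj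
  -- for each point x outside A, exactly d' lines through x miss A
  have hDx : ∀ x : X, x ∉ A → {l ∈ Ldisj | I x l}.ncard = d' := by
    intro x hx
    set Tx : Finset Λ := (Set.toFinite {l : Λ | I x l}).toFinset with hTx
    have hTxcard : Tx.card = q + 1 := by
      rw [hTx, ← Set.ncard_eq_toFinset_card _ (Set.toFinite _), hplines x]
    have hpart := partition x A hx
    set M : Finset Λ := Tx.filter (fun l => ∃ a ∈ A, I a l) with hM
    have hMsub : M ⊆ Tx := Finset.filter_subset _ _
    have hsum : A.ncard = ∑ l ∈ M, {a ∈ A | I a l}.ncard := by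
      rw [hpart]
      refine (Finset.sum_subset hMsub ?_).symm
      intro l hl hl'
      have hnomeet : ∀ a ∈ A, ¬ I a l := by
        intro a ha hal
        exact hl' (Finset.mem_filter.mpr ⟨hl, ⟨a, ha, hal⟩⟩)
      have : {a ∈ A | I a l} = ∅ := by
        ext a; simp only [Set.mem_setOf_eq, Set.mem_empty_iff_false, iff_false]
        rintro ⟨ha, hal⟩; exact hnomeet a ha hal
      rw [this, Set.ncard_empty]
    have hterm : ∀ l ∈ M, {a ∈ A | I a l}.ncard = d := by
      intro l hl
      obtain ⟨a, ha, hal⟩ := (Finset.mem_filter.mp hl).2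
      rcases hAlines l with h' | h'
      · exact absurd hal (h' a ha)
      · exact h'
    rw [Finset.sum_congr rfl hterm, Finset.sum_const, smul_eq_mul] at hsum
    have hMcard : M.card = d * d' - d' + 1 := by
      have := hsum.symm.trans hAcard'
      exact Nat.eq_of_mul_eq_mul_right (by omega) this
    -- the set in question is Tx \ M
    have hset : {l ∈ Ldisj | I x l} = ↑(Tx \ M) := by
      ext l
      simp only [Set.mem_setOf_eq, Finset.coe_sdiff, Set.mem_diff, Finset.mem_coe,
        hM, Finset.mem_filter, hTx, Set.Finite.mem_toFinset, hLdisj]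
      constructor
      · rintro ⟨h1, h2⟩
        exact ⟨h2, fun hc => by obtain ⟨a, ha, hal⟩ := hc.2; exact h1 a ha hal⟩
      · rintro ⟨h1, h2⟩
        refine ⟨fun a ha hal => h2 ⟨h1, ⟨a, ha, hal⟩⟩, h1⟩
    rw [hset, Set.ncard_coe_finset, Finset.card_sdiff_of_subset hMsub, hTxcard, hMcard, hq]
    omega
  -- every point of a disjoint line is outside A
  have hLpts : ∀ l ∈ Ldisj, {x ∈ Aᶜ | I x l}.ncard = q + 1 := by
    intro l hl
    have : {x ∈ Aᶜ | I x l} = {x : X | I x l} := by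
      ext x
      simp only [Set.mem_setOf_eq, Set.mem_compl_iff]
      exact ⟨fun h => h.2, fun h => ⟨fun hx => hl x hx h, h⟩⟩
    rw [this, hlpts]
  -- double counting
  have hdc := double_count (Set.toFinite Aᶜ) (Set.toFinite Ldisj) I
  have hlhs : ∑ x ∈ (Set.toFinite Aᶜ).toFinset, {l ∈ Ldisj | I x l}.ncard
      = (q + 1) * (q + 1 - d) * d' := by
    have hc : ∀ x ∈ (Set.toFinite Aᶜ).toFinset, {l ∈ Ldisj | I x l}.ncard = d' :=
      fun x hx => hDx x (by simpa using hx)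
    rw [Finset.sum_congr rfl hc,
      Finset.sum_const, smul_eq_mul, ← Set.ncard_eq_toFinset_card _ (Set.toFinite _), hAc]
  have hrhs : ∑ l ∈ (Set.toFinite Ldisj).toFinset, {x ∈ Aᶜ | I x l}.ncard
      = Ldisj.ncard * (q + 1) := by
    have hc : ∀ l ∈ (Set.toFinite Ldisj).toFinset, {x ∈ Aᶜ | I x l}.ncard = q + 1 :=
      fun l hl => hLpts l (by simpa using hl)
    rw [Finset.sum_congr rfl hc,
      Finset.sum_const, smul_eq_mul, ← Set.ncard_eq_toFinset_card _ (Set.toFinite _)]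
  have hLcard : Ldisj.ncard = d' * (d * d' - d + 1) := by
    have h : (q + 1) * ((q + 1 - d) * d') = (q + 1) * Ldisj.ncard := by
      rw [← Nat.mul_assoc, ← hlhs, hdc, hrhs, Nat.mul_comm]
    have h2 := Nat.eq_of_mul_eq_mul_left (show 0 < q + 1 by omega) h
    rw [← h2, hq]
    have he : d * d' + 1 - d = d * d' - d + 1 := by omega
    rw [he]
    exact Nat.mul_comm _ _
  -- conclusion: the set of classes is the image of Ldisj
  have himg : {c : Set (TWpoints A) |
      ∃ l₀ : Λ, (∀ x ∈ A, ¬ I x l₀) ∧ c = {p : TWpoints A | I p.1 l₀}}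
      = (fun l₀ : Λ => {p : TWpoints A | I p.1 l₀}) '' Ldisj := by
    ext c
    simp only [Set.mem_setOf_eq, Set.mem_image, hLdisj]
    constructor
    · rintro ⟨l₀, h1, rfl⟩; exact ⟨l₀, h1, rfl⟩
    · rintro ⟨l₀, h1, rfl⟩; exact ⟨l₀, h1, rfl⟩
  rw [himg, Set.ncard_image_of_injOn ?_, hLcard]
  intro l₀ h0 m₀ h1 heq
  by_contra hne
  exact part2 l₀ m₀ h0 h1 hne heq
end

section
/- Let d ≥ 2 and d' ≥ 2 be integers and let G be a partial geometry pg(s,t,α) with parameters s = d(d'−1), t = d'(d−1), α = (d−1)(d'−1). Suppose that G admits a set C of d(dd'−d'+1) pairwise orthogonal parallel classes of lines, and that the dual geometry G' admits a set C' of d'(dd'−d+1) pairwise orthogonal parallel classes of lines. Then there exists a projective plane of order q = dd' containing a maximal arc A of degree d such that G is isomorphic to the partial geometry arising from A via the Thas–Wallis construction. -/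
universe u

/-!
Adjoin the classes of `C` to `G` as new points and the classes of `C'` as new lines: a point lies
on a new line `c'` iff it belongs to `c'`, a new point `c` lies on a line iff the line belongs to
`c`, and no new point lies on a new line.

With `q = dd'`, double counting gives `(s+1)(q+1)` points and `(t+1)(q+1)` lines, so every class
has `q + 1` members. Since distinct classes of `C` share exactly one line, the number of classes
through a line has mean `d` and (counting pairs of classes) second factorial moment `d(d-1)`; its
variance vanishes, so every line lies in exactly `d` classes. The lines other than `l` sharing a
class with `l` are then `dq` distinct lines disjoint from `l`, which is the number of all lines
disjoint from `l`: any two disjoint lines lie in a common class. Dually for points and `C'`. These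
are the axioms of a projective plane of order `q` for the extended structure; the new points form
a maximal arc of degree `d` in it, and `G` is its Thas–Wallis geometry.
-/

open Finset
open scoped Classical

theorem Set.ncard_mul_eq_ncard_mul {α β : Type*} [Finite α] [Finite β] {A : Set α} {B : Set β}
    (r : α → β → Prop) {a b : ℕ} (ha : ∀ x ∈ A, {y ∈ B | r x y}.ncard = a)
    (hb : ∀ y ∈ B, {x ∈ A | r x y}.ncard = b) : A.ncard * a = B.ncard * b := by
  lift A to Finset α using A.toFinite
  lift B to Finset β using B.toFinite
  simp only [Set.ncard_coe_finset]
  refine card_mul_eq_card_mul r (fun x hx => ?_) fun y hy => ?_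
  · rw [← ha x hx, ← Set.ncard_coe_finset, bipartiteAbove, coe_filter]
    rfl
  · rw [← hb y hy, ← Set.ncard_coe_finset, bipartiteBelow, coe_filter]
    rfl

theorem Set.ncard_setOf_eq_card_filter {α : Type*} [Fintype α] (φ : α → Prop) [DecidablePred φ] :
    {x | φ x}.ncard = #{x | φ x} := by
  simp [Set.ncard_eq_toFinset_card']

theorem Set.ncard_setOf_eq_one_iff {α : Type*} {φ : α → Prop} :
    {x | φ x}.ncard = 1 ↔ ∃! x, φ x := by
  simp only [Set.ncard_eq_one, Set.eq_singleton_iff_unique_mem, Set.mem_ofPred_eq, ExistsUnique]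

theorem Set.ncard_eq_ncard_preimage_inl_add {α β : Type*} [Finite α] [Finite β]
    (S : Set (α ⊕ β)) : S.ncard = (Sum.inl ⁻¹' S).ncard + (Sum.inr ⁻¹' S).ncard := by
  rw [← Set.ncard_image_of_injective (Sum.inl ⁻¹' S) Sum.inl_injective,
    ← Set.ncard_image_of_injective (Sum.inr ⁻¹' S) Sum.inr_injective, ← Set.ncard_union_eq]
  · congr 1
    ext (a | b) <;> simp
  · rw [Set.disjoint_left]
    rintro _ ⟨a, -, rfl⟩ ⟨b, -, hb⟩
    exact Sum.inr_ne_inl hb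

theorem Finset.eq_of_sum_eq_of_sum_mul_sub_one_eq {ι : Type*} {s : Finset ι} {x : ι → ℤ} {r : ℤ}
    (h₁ : ∑ i ∈ s, x i = r * #s) (h₂ : ∑ i ∈ s, x i * (x i - 1) = r * (r - 1) * #s) {i : ι}
    (hi : i ∈ s) : x i = r := by
  have hvar : ∑ i ∈ s, (x i - r) ^ 2 = 0 := by
    calc ∑ i ∈ s, (x i - r) ^ 2 = ∑ i ∈ s, (x i * (x i - 1) + (1 - 2 * r) * x i + r ^ 2) :=
          sum_congr rfl fun i _ => by ring
      _ = 0 := by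
          simp only [sum_add_distrib, ← mul_sum, sum_const, nsmul_eq_mul, h₁, h₂]
          ring
  exact sub_eq_zero.1 <| pow_eq_zero_iff two_ne_zero |>.1 <|
    (sum_eq_zero_iff_of_nonneg fun i _ => sq_nonneg (x i - r)).1 hvar i hi

section Incidence

variable {P L : Type*} [Finite P] [Finite L] {I : P → L → Prop}

theorem ncard_collinear {k : ℕ} (hinter : ∀ l l', l ≠ l' → {p | I p l ∧ I p l'}.ncard ≤ 1)
    (hk : ∀ l, {p | I p l}.ncard = k) (p : P) :
    {p' | p' ≠ p ∧ ∃ l, I p l ∧ I p' l}.ncard = {l | I p l}.ncard * (k - 1) := by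
  refine (Set.ncard_mul_eq_ncard_mul (fun l p' => I p' l) (fun l hl => ?_) fun p' hp' => ?_).trans
    (mul_one _) |>.symm
  · have : {p' ∈ {p' | p' ≠ p ∧ ∃ l, I p l ∧ I p' l} | I p' l} = {p' | I p' l} \ {p} := by
      ext p'
      exact ⟨fun h => ⟨h.2, h.1.1⟩, fun h => ⟨⟨h.2, l, hl, h.1⟩, h.1⟩⟩
    rw [this, Set.ncard_sdiff_singleton_of_mem (show p ∈ {p' | I p' l} from hl), hk]
  · obtain ⟨hne, l₀, hpl₀, hp'l₀⟩ := hp'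
    refine Set.ncard_eq_one.2 ⟨l₀, Set.eq_singleton_iff_unique_mem.2 ⟨⟨hpl₀, hp'l₀⟩, ?_⟩⟩
    rintro l ⟨hpl, hp'l⟩
    by_contra hll₀
    exact hne ((Set.ncard_le_one (Set.toFinite _)).1 (hinter l l₀ hll₀) p' ⟨hp'l, hp'l₀⟩
      p ⟨hpl, hpl₀⟩)

theorem ncard_lines_eq_of_ncard_inter_eq_one {k r : ℕ} (hk : ∀ l, {p | I p l}.ncard = k)
    (hinter : ∀ l l', l ≠ l' → {p | I p l ∧ I p l'}.ncard = 1)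
    (h₁ : Nat.card L * k = r * Nat.card P)
    (h₂ : (Nat.card L : ℤ) * (Nat.card L - 1) = r * (r - 1) * Nat.card P) (p : P) :
    {l | I p l}.ncard = r := by
  cases nonempty_fintype P
  cases nonempty_fintype L
  simp only [Set.ncard_setOf_eq_card_filter, Nat.card_eq_fintype_card] at hk hinter h₁ h₂ ⊢
  have hflags : ∑ p, #{l | I p l} = Fintype.card L * k := by
    simpa [bipartiteAbove, bipartiteBelow, hk] using
      sum_card_bipartiteAbove_eq_sum_card_bipartiteBelow (s := univ) (t := univ) I
  -- ordered pairs of distinct lines, counted through their unique common point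
  have hpairs : ∑ p, #({l | I p l} : Finset L).offDiag = #(univ : Finset L).offDiag := by
    have hbelow : ∀ ll' ∈ (univ : Finset L).offDiag,
        #(bipartiteBelow (fun p ll' => I p ll'.1 ∧ I p ll'.2) univ ll') = 1 :=
      fun ll' hll' => hinter ll'.1 ll'.2 (mem_offDiag.1 hll').2.2
    have hoff : ∀ p, bipartiteAbove (fun p ll' => I p ll'.1 ∧ I p ll'.2) univ.offDiag p
        = ({l | I p l} : Finset L).offDiag := by
      intro p
      ext ⟨l, l'⟩
      simp only [bipartiteAbove, mem_filter, mem_offDiag, mem_univ, true_and]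
      tauto
    have := sum_card_bipartiteAbove_eq_sum_card_bipartiteBelow (s := univ)
      (t := (univ : Finset L).offDiag) (fun p ll' => I p ll'.1 ∧ I p ll'.2)
    rw [sum_congr rfl hbelow] at this
    simpa only [hoff, sum_const, smul_eq_mul, mul_one] using this
  refine Int.ofNat_inj.1 (eq_of_sum_eq_of_sum_mul_sub_one_eq (s := univ)
    (x := fun p => (#{l | I p l} : ℤ)) ?_ ?_ (mem_univ p))
  · rw [card_univ, ← Nat.cast_sum, hflags]
    exact_mod_cast h₁
  · have := congrArg (Nat.cast : ℕ → ℤ) hpairs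
    push_cast [offDiag_card, Nat.cast_sub (Nat.le_mul_self _)] at this
    rw [card_univ, ← h₂]
    simpa only [card_univ, mul_sub_one] using this

end Incidence

theorem ncard_mem_eq_of_orthogonal {L : Type*} [Finite L] {C : Set (Set L)} {t d d' n : ℕ}
    (ht : t + d' = n) (hn : d * d' = n) (hL : Nat.card L = (t + 1) * (n + 1))
    (hC : C.ncard = d * (t + 1)) (hsize : ∀ c ∈ C, c.ncard = n + 1)
    (horth : ∀ c ∈ C, ∀ c' ∈ C, c ≠ c' → (c ∩ c').ncard = 1) (l : L) :
    {c : C | l ∈ c.1}.ncard = d := by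
  have htZ : (t : ℤ) + d' = n := by exact_mod_cast ht
  have hnZ : (d : ℤ) * d' = n := by exact_mod_cast hn
  refine ncard_lines_eq_of_ncard_inter_eq_one (I := fun l (c : C) => l ∈ c.1)
    (fun c => hsize _ c.2) (fun c c' h => horth _ c.2 _ c'.2 (Subtype.coe_ne_coe.2 h)) ?_ ?_ l
  · rw [Nat.card_coe_set_eq, hC, hL]
    ring
  · rw [Nat.card_coe_set_eq, hC, hL]
    push_cast
    linear_combination (d * (t + 1) * d : ℤ) * htZ - (d * (t + 1) : ℤ) * hnZ

section PartialLinearSpace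

variable {P L : Type*} {I : P → L → Prop} {s t : ℕ}

structure IsPartialLinearSpace (I : P → L → Prop) (s t : ℕ) : Prop where
  ncard_lines_inter_le_one : ∀ p p', p ≠ p' → {l | I p l ∧ I p' l}.ncard ≤ 1
  ncard_points : ∀ l, {p | I p l}.ncard = s + 1
  ncard_lines : ∀ p, {l | I p l}.ncard = t + 1

theorem IsPartialGeometry.isPartialLinearSpace {α : ℕ} (hG : IsPartialGeometry I s t α) :
    IsPartialLinearSpace I s t :=
  let ⟨_, _, _, _, _, hinter, hpoints, hlines, _⟩ := hG
  ⟨hinter, hpoints, hlines⟩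

variable [Finite P] [Finite L]

namespace IsPartialLinearSpace

theorem dual (hI : IsPartialLinearSpace I s t) :
    IsPartialLinearSpace (fun l p => I p l) t s := by
  refine ⟨fun l l' hll' => (Set.ncard_le_one (Set.toFinite _)).2 fun p hp p' hp' => ?_,
    hI.ncard_lines, hI.ncard_points⟩
  by_contra hpp'
  exact hll' ((Set.ncard_le_one (Set.toFinite _)).1 (hI.ncard_lines_inter_le_one p p' hpp')
    l ⟨hp.1, hp'.1⟩ l' ⟨hp.2, hp'.2⟩)

theorem ncard_meeting (hI : IsPartialLinearSpace I s t) (l : L) :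
    {m | m ≠ l ∧ ∃ p, I p l ∧ I p m}.ncard = (s + 1) * t := by
  simpa [hI.ncard_points] using
    ncard_collinear (I := fun l p => I p l) hI.ncard_lines_inter_le_one hI.ncard_lines l

theorem ncard_points_sdiff (hI : IsPartialLinearSpace I s t) {l m : L} (hml : m ≠ l)
    (hmeet : ∃ p, I p l ∧ I p m) : ({p | I p m} \ {p | I p l}).ncard = s := by
  obtain ⟨p, hpl, hpm⟩ := hmeet
  have hone : ({p | I p m} ∩ {p | I p l}).ncard = 1 :=
    le_antisymm (hI.dual.ncard_lines_inter_le_one m l hml)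
      ((Set.ncard_pos (Set.toFinite _)).2 ⟨p, hpm, hpl⟩)
  have := Set.ncard_inter_add_ncard_sdiff_eq_ncard {p | I p m} {p | I p l}
  rw [hone, hI.ncard_points] at this
  omega

theorem nat_card_mul (hI : IsPartialLinearSpace I s t) :
    Nat.card P * (t + 1) = Nat.card L * (s + 1) := by
  simpa using Set.ncard_mul_eq_ncard_mul (A := Set.univ) (B := Set.univ) I
    (fun p _ => by simpa using hI.ncard_lines p) fun l _ => by simpa using hI.ncard_points l

theorem nat_card_lines {m : ℕ} (hI : IsPartialLinearSpace I s t)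
    (hP : Nat.card P = (s + 1) * m) : Nat.card L = (t + 1) * m :=
  Nat.eq_of_mul_eq_mul_right s.add_one_pos <| by rw [← hI.nat_card_mul, hP]; ring

end IsPartialLinearSpace

theorem IsParallelClass.ncard_eq {c : Set L} {m : ℕ} (hc : IsParallelClass I c)
    (hk : ∀ l, {p | I p l}.ncard = s + 1) (hP : Nat.card P = (s + 1) * m) : c.ncard = m := by
  refine Nat.eq_of_mul_eq_mul_right s.add_one_pos ?_
  have hcount := Set.ncard_mul_eq_ncard_mul (A := c) (B := Set.univ) (b := 1)
    (fun l p => I p l) (fun l _ => by simpa using hk l) fun p _ => ?_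
  · rw [hcount, Set.ncard_univ, hP]
    ring
  · obtain ⟨l, hlc, hpl⟩ := hc.1 p
    refine Set.ncard_eq_one.2 ⟨l, Set.eq_singleton_iff_unique_mem.2 ⟨⟨hlc, hpl⟩, ?_⟩⟩
    rintro l' ⟨hl'c, hpl'⟩
    by_contra hne
    exact hc.2 l' hl'c l hlc hne p ⟨hpl', hpl⟩

theorem IsPartialGeometry.nat_card_points [Nonempty L] {α q : ℕ}
    (hG : IsPartialGeometry I s t α) (hq : s * t = q * α) : Nat.card P = (s + 1) * (q + 1) := by
  have hI := hG.isPartialLinearSpace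
  obtain ⟨-, -, -, -, hα, -, -, -, hmeet⟩ := hG
  obtain ⟨l⟩ := ‹Nonempty L›
  -- count the pairs `(p, m)` with `p` off `l` and `m` a line through `p` meeting `l`
  have hpairs := Set.ncard_mul_eq_ncard_mul (A := {p | I p l}ᶜ)
    (B := {m | m ≠ l ∧ ∃ p, I p l ∧ I p m}) (a := α) (fun p m => I p m) (fun p hp => ?_)
    fun m hm => (congrArg Set.ncard (Set.ext fun _ => and_comm)).trans
      (hI.ncard_points_sdiff hm.1 hm.2)
  · rw [hI.ncard_meeting, mul_assoc, mul_comm t, hq, ← mul_assoc] at hpairs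
    rw [← Set.ncard_add_ncard_compl {p | I p l}, hI.ncard_points,
      Nat.eq_of_mul_eq_mul_right hα hpairs]
    ring
  · rw [← hmeet p l hp]
    congr 1
    ext m
    constructor
    · rintro ⟨⟨-, p', hp'l, hp'm⟩, hpm⟩
      exact ⟨hpm, p', hp'm, hp'l⟩
    · rintro ⟨hpm, p', hp'm, hp'l⟩
      exact ⟨⟨fun h => hp (h ▸ hpm), p', hp'l, hp'm⟩, hpm⟩

theorem IsPartialLinearSpace.exists_mem_of_not_meet
    (hI : IsPartialLinearSpace I s t) {C : Set (Set L)} {k r : ℕ}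
    (hpar : ∀ c ∈ C, IsParallelClass I c)
    (horth : ∀ c ∈ C, ∀ c' ∈ C, c ≠ c' → (c ∩ c').ncard ≤ 1) (hk : ∀ c ∈ C, c.ncard = k)
    {l m : L} (hr : {c : C | l ∈ c.1}.ncard = r)
    (hL : Nat.card L = 1 + (s + 1) * t + r * (k - 1)) (hml : m ≠ l)
    (hdisj : ¬∃ p, I p l ∧ I p m) : ∃ c ∈ C, l ∈ c ∧ m ∈ c := by
  have hclass := ncard_collinear (I := fun l (c : C) => l ∈ c.1)
    (fun c c' h => horth _ c.2 _ c'.2 (Subtype.coe_ne_coe.2 h)) (fun c => hk _ c.2) l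
  set A := {m | m ≠ l ∧ ∃ p, I p l ∧ I p m}
  set B := {m | m ≠ l ∧ ∃ c : C, l ∈ c.1 ∧ m ∈ c.1}
  have hAB : Disjoint A B := by
    rw [Set.disjoint_left]
    rintro m ⟨hml, p, hpl, hpm⟩ ⟨-, c, hlc, hmc⟩
    exact (hpar c c.2).2 l hlc m hmc hml.symm p ⟨hpl, hpm⟩
  have hcover : A ∪ B = {l}ᶜ := by
    refine Set.eq_of_subset_of_ncard_le (by rintro m (h | h) <;> exact h.1) ?_
    rw [Set.ncard_union_eq hAB, hI.ncard_meeting, hclass, hr, Set.ncard_compl,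
      Set.ncard_singleton]
    omega
  obtain h | ⟨-, c, hlc, hmc⟩ := hcover.symm.subset (Set.mem_compl_singleton_iff.2 hml)
  · exact (hdisj h.2).elim
  · exact ⟨c, c.2, hlc, hmc⟩

end PartialLinearSpace

section Completion

variable {P L : Type*} (I : P → L → Prop) (C : Set (Set L)) (C' : Set (Set P))

def completionInc : P ⊕ C → L ⊕ C' → Prop
  | .inl p, .inl l => I p l
  | .inl p, .inr c => p ∈ c.1
  | .inr c, .inl l => l ∈ c.1
  | .inr _, .inr _ => False

theorem completionInc_dual (x : P ⊕ C) (y : L ⊕ C') :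
    completionInc (fun l p => I p l) C' C y x = completionInc I C C' x y := by
  cases x <;> cases y <;> rfl

variable {I C C'} {s t d d' n : ℕ}

theorem existsUnique_completionInc_inl_inr (hpar : ∀ c ∈ C, IsParallelClass I c) (p : P)
    (c : C) : ∃! z, completionInc I C C' (.inl p) z ∧ completionInc I C C' (.inr c) z := by
  obtain ⟨l, hlc, hpl⟩ := (hpar c c.2).1 p
  refine ⟨.inl l, ⟨hpl, hlc⟩, ?_⟩
  rintro (l' | c') ⟨hpl', hl'c⟩
  · by_contra hne
    exact (hpar c c.2).2 l' hl'c l hlc (fun h => hne (congrArg _ h)) p ⟨hpl', hpl⟩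
  · exact hl'c.elim

theorem existsUnique_completionInc [Finite P] [Finite L] (hI : IsPartialLinearSpace I s t)
    (hpar : ∀ c ∈ C, IsParallelClass I c)
    (hpar' : ∀ c ∈ C', IsParallelClass (fun l p => I p l) c)
    (horth : ∀ c ∈ C, ∀ c' ∈ C, c ≠ c' → (c ∩ c').ncard = 1)
    (horth' : ∀ c ∈ C', ∀ c' ∈ C', c ≠ c' → (c ∩ c').ncard ≤ 1)
    (hres : ∀ p p', p' ≠ p → (¬∃ l, I p l ∧ I p' l) → ∃ c ∈ C', p ∈ c ∧ p' ∈ c)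
    {x y : P ⊕ C} (hxy : x ≠ y) :
    ∃! z, completionInc I C C' x z ∧ completionInc I C C' y z := by
  rcases x with p | c <;> rcases y with p' | c'
  · have hpp' : p ≠ p' := fun h => hxy (congrArg _ h)
    by_cases hcol : ∃ l, I p l ∧ I p' l
    · obtain ⟨l, hpl, hp'l⟩ := hcol
      refine ⟨.inl l, ⟨hpl, hp'l⟩, ?_⟩
      rintro (l' | c) ⟨hpl', hp'l'⟩
      · exact congrArg _ ((Set.ncard_le_one (Set.toFinite _)).1
          (hI.ncard_lines_inter_le_one p p' hpp') l' ⟨hpl', hp'l'⟩ l ⟨hpl, hp'l⟩)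
      · exact ((hpar' c c.2).2 p hpl' p' hp'l' hpp' l ⟨hpl, hp'l⟩).elim
    · obtain ⟨c, hc, hpc, hp'c⟩ := hres p p' (Ne.symm hpp') hcol
      refine ⟨.inr ⟨c, hc⟩, ⟨hpc, hp'c⟩, ?_⟩
      rintro (l | c') ⟨hpl, hp'l⟩
      · exact (hcol ⟨l, hpl, hp'l⟩).elim
      · refine congrArg _ (Subtype.ext ?_)
        by_contra hne
        exact hpp' ((Set.ncard_le_one (Set.toFinite _)).1 (horth' _ c'.2 c hc hne)
          p ⟨hpl, hpc⟩ p' ⟨hp'l, hp'c⟩)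
  · exact existsUnique_completionInc_inl_inr hpar p c'
  · simpa only [and_comm] using existsUnique_completionInc_inl_inr (C' := C') hpar p' c
  · have hcc' : c.1 ≠ c'.1 := fun h => hxy (congrArg _ (Subtype.ext h))
    obtain ⟨l, hl, huniq⟩ := Set.ncard_setOf_eq_one_iff.1 (horth _ c.2 _ c'.2 hcc')
    refine ⟨.inl l, hl, ?_⟩
    rintro (l' | c'') ⟨hl'c, hl'c'⟩
    · exact congrArg _ (huniq l' ⟨hl'c, hl'c'⟩)
    · exact hl'c.elim

theorem ncard_completionInc_lines [Finite P] [Finite L] (hI : IsPartialLinearSpace I s t)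
    (hr' : ∀ p, {c : C' | p ∈ c.1}.ncard = d') (ht : t + d' = n)
    (hsize : ∀ c ∈ C, c.ncard = n + 1) (x : P ⊕ C) :
    {z | completionInc I C C' x z}.ncard = n + 1 := by
  rw [Set.ncard_eq_ncard_preimage_inl_add]
  rcases x with p | c
  · change {l | I p l}.ncard + {c : C' | p ∈ c.1}.ncard = n + 1
    rw [hI.ncard_lines, hr']
    omega
  · change c.1.ncard + (∅ : Set C').ncard = n + 1
    rw [hsize c c.2, Set.ncard_empty]

theorem isProjectivePlane_completionInc [Finite P] [Finite L]
    (hI : IsPartialLinearSpace I s t) (hpar : ∀ c ∈ C, IsParallelClass I c)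
    (hpar' : ∀ c ∈ C', IsParallelClass (fun l p => I p l) c)
    (horth : ∀ c ∈ C, ∀ c' ∈ C, c ≠ c' → (c ∩ c').ncard = 1)
    (horth' : ∀ c ∈ C', ∀ c' ∈ C', c ≠ c' → (c ∩ c').ncard = 1)
    (hres : ∀ l m, m ≠ l → (¬∃ p, I p l ∧ I p m) → ∃ c ∈ C, l ∈ c ∧ m ∈ c)
    (hres' : ∀ p p', p' ≠ p → (¬∃ l, I p l ∧ I p' l) → ∃ c ∈ C', p ∈ c ∧ p' ∈ c)
    (hr : ∀ l, {c : C | l ∈ c.1}.ncard = d) (hr' : ∀ p, {c : C' | p ∈ c.1}.ncard = d')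
    (hs : s + d = n) (ht : t + d' = n)
    (hsize : ∀ c ∈ C, c.ncard = n + 1) (hsize' : ∀ c ∈ C', c.ncard = n + 1) :
    IsProjectivePlane (completionInc I C C') n := by
  refine ⟨inferInstance, inferInstance, fun x y hxy => ?_, fun y y' hyy' => ?_,
    fun y => ?_, ncard_completionInc_lines hI hr' ht hsize⟩
  · exact Set.ncard_setOf_eq_one_iff.2 <| existsUnique_completionInc hI hpar hpar' horth
      (fun c hc c' hc' h => (horth' c hc c' hc' h).le) hres' hxy
  · simp only [← completionInc_dual I C C']
    exact Set.ncard_setOf_eq_one_iff.2 <| existsUnique_completionInc hI.dual hpar' hpar horth'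
      (fun c hc c' hc' h => (horth c hc c' hc' h).le) hres hyy'
  · simp only [← completionInc_dual I C C']
    exact ncard_completionInc_lines hI.dual hr hs hsize' y

theorem isMaximalArc_range_inr (hC : C.ncard = d * n - n + d)
    (hr : ∀ l, {c : C | l ∈ c.1}.ncard = d) :
    IsMaximalArc (completionInc I C C') n d (Set.range Sum.inr) := by
  refine ⟨by rw [Set.ncard_range_of_injective Sum.inr_injective, Nat.card_coe_set_eq, hC], ?_⟩
  rintro (l | c')
  · refine Or.inr ?_
    have : {x ∈ Set.range Sum.inr | completionInc I C C' x (.inl l)}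
        = Sum.inr '' {c : C | l ∈ c.1} := by
      ext x
      constructor
      · rintro ⟨⟨c, rfl⟩, hlc⟩
        exact ⟨c, hlc, rfl⟩
      · rintro ⟨c, hlc, rfl⟩
        exact ⟨⟨c, rfl⟩, hlc⟩
    rw [this, Set.ncard_image_of_injective _ Sum.inr_injective, hr l]
  · exact Or.inl fun _ ⟨_, hx⟩ => hx ▸ id

theorem exists_equiv_thasWallis (hcov : ∀ l, ∃ c ∈ C, l ∈ c) :
    ∃ (f : P ≃ TWpoints (Set.range (Sum.inr : C → P ⊕ C)))
      (g : L ≃ TWlines (completionInc I C C') (Set.range Sum.inr)),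
      ∀ p l, I p l ↔ TWinc (completionInc I C C') (Set.range Sum.inr) (f p) (g l) := by
  refine ⟨(Equiv.ofInjective _ Sum.inl_injective).trans (Equiv.subtypeEquivRight ?_),
    (Equiv.ofInjective _ Sum.inl_injective).trans (Equiv.subtypeEquivRight ?_),
    fun p l => Iff.rfl⟩
  · rintro (p | c) <;> simp
  · rintro (l | c')
    · obtain ⟨c, hc, hlc⟩ := hcov l
      exact iff_of_true ⟨l, rfl⟩ ⟨.inr ⟨c, hc⟩, ⟨_, rfl⟩, hlc⟩
    · refine iff_of_false (by simp) ?_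
      rintro ⟨_, ⟨c, rfl⟩, h⟩
      exact h

end Completion

theorem IsPartialLinearSpace.thasWallis_of_orthogonal_classes {P L : Type*} [Finite P] [Finite L]
    {I : P → L → Prop} {s t d d' n : ℕ} (hI : IsPartialLinearSpace I s t)
    (hs : s + d = n) (ht : t + d' = n) (hn : d * d' = n) (hd : 0 < d)
    (hP : Nat.card P = (s + 1) * (n + 1))
    {C : Set (Set L)} (hC : C.ncard = d * (t + 1)) (hpar : ∀ c ∈ C, IsParallelClass I c)
    (horth : ∀ c ∈ C, ∀ c' ∈ C, c ≠ c' → (c ∩ c').ncard = 1)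
    {C' : Set (Set P)} (hC' : C'.ncard = d' * (s + 1))
    (hpar' : ∀ c ∈ C', IsParallelClass (fun l p => I p l) c)
    (horth' : ∀ c ∈ C', ∀ c' ∈ C', c ≠ c' → (c ∩ c').ncard = 1) :
    IsProjectivePlane (completionInc I C C') n ∧
      IsMaximalArc (completionInc I C C') n d (Set.range Sum.inr) ∧
      ∃ (f : P ≃ TWpoints (Set.range (Sum.inr : C → P ⊕ C)))
        (g : L ≃ TWlines (completionInc I C C') (Set.range Sum.inr)),
        ∀ p l, I p l ↔ TWinc (completionInc I C C') (Set.range Sum.inr) (f p) (g l) := by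
  have hL := hI.nat_card_lines hP
  have hsize : ∀ c ∈ C, c.ncard = n + 1 := fun c hc => (hpar c hc).ncard_eq hI.ncard_points hP
  have hsize' : ∀ c ∈ C', c.ncard = n + 1 :=
    fun c hc => (hpar' c hc).ncard_eq hI.dual.ncard_points hL
  have hr : ∀ l, {c : C | l ∈ c.1}.ncard = d := ncard_mem_eq_of_orthogonal ht hn hL hC hsize horth
  have hr' : ∀ p, {c : C' | p ∈ c.1}.ncard = d' :=
    ncard_mem_eq_of_orthogonal hs (by rw [mul_comm, hn]) hP hC' hsize' horth'
  have hres : ∀ l m, m ≠ l → (¬∃ p, I p l ∧ I p m) → ∃ c ∈ C, l ∈ c ∧ m ∈ c :=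
    fun l m => hI.exists_mem_of_not_meet hpar (fun c hc c' hc' h => (horth c hc c' hc' h).le)
      hsize (hr l) (by rw [hL, Nat.add_sub_cancel]; linear_combination d * ht - t * hs - hn)
  have hres' : ∀ p p', p' ≠ p → (¬∃ l, I p l ∧ I p' l) → ∃ c ∈ C', p ∈ c ∧ p' ∈ c :=
    fun p p' => hI.dual.exists_mem_of_not_meet hpar'
      (fun c hc c' hc' h => (horth' c hc c' hc' h).le) hsize' (hr' p)
      (by rw [hP, Nat.add_sub_cancel]; linear_combination d' * hs - s * ht - hn)
  have harc : C.ncard = d * n - n + d := by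
    have : d * t + n = d * n := by linear_combination d * ht - hn
    rw [hC, mul_add_one, Nat.eq_sub_of_add_eq this]
  have hcov : ∀ l, ∃ c ∈ C, l ∈ c := fun l => by
    obtain ⟨c, hc⟩ := Set.nonempty_of_ncard_ne_zero (s := {c : C | l ∈ c.1}) (by rw [hr l]; omega)
    exact ⟨c, c.2, hc⟩
  exact ⟨isProjectivePlane_completionInc hI hpar hpar' horth horth' hres hres' hr hr' hs ht
    hsize hsize', isMaximalArc_range_inr harc hr, exists_equiv_thasWallis hcov⟩

/-- Sufficiency: if a partial geometry `G` with parameters `s = d(d'-1)`,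
`t = d'(d-1)`, `α = (d-1)(d'-1)` (`d, d' ≥ 2`) admits a set of
`d(dd' - d' + 1)` pairwise orthogonal parallel classes, and its dual geometry
admits a set of `d'(dd' - d + 1)` pairwise orthogonal parallel classes, then
there exist a projective plane of order `q = dd'` and a maximal arc `A` of
degree `d` in it such that `G` is isomorphic to the partial geometry arising
from `A` via the Thas–Wallis construction. -/
theorem stmt9 {P L : Type u} {I : P → L → Prop} {d d' : ℕ}
    (hd : 2 ≤ d) (hd' : 2 ≤ d')
    (hG : IsPartialGeometry I (d * (d' - 1)) (d' * (d - 1)) ((d - 1) * (d' - 1)))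
    (C : Set (Set L)) (hmC : C.ncard = d * (d * d' - d' + 1))
    (hparC : ∀ c ∈ C, IsParallelClass I c)
    (horthC : ∀ c ∈ C, ∀ c' ∈ C, c ≠ c' → (c ∩ c').ncard = 1)
    (C' : Set (Set P)) (hmC' : C'.ncard = d' * (d * d' - d + 1))
    (hparC' : ∀ c ∈ C', IsParallelClass (fun (l : L) (p : P) => I p l) c)
    (horthC' : ∀ c ∈ C', ∀ c'' ∈ C', c ≠ c'' → (c ∩ c'').ncard = 1) :
    ∃ (X Λ : Type u) (J : X → Λ → Prop) (A : Set X),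
      IsProjectivePlane J (d * d') ∧ IsMaximalArc J (d * d') d A ∧
      ∃ (f : P ≃ TWpoints A) (g : L ≃ TWlines J A),
        ∀ (p : P) (l : L), I p l ↔ TWinc J A (f p) (g l) := by
  have := hG.1
  have := hG.2.1
  -- two distinct classes of `C` share a line
  have : Nonempty L := by
    obtain ⟨c, c', hc, hc', hne⟩ := (Set.one_lt_ncard_iff (Set.toFinite _)).1 <| hmC ▸
      Nat.lt_of_lt_of_le hd (Nat.le_mul_of_pos_right d (Nat.succ_pos _))
    exact ⟨(Set.nonempty_of_ncard_ne_zero (by rw [horthC c hc c' hc' hne]; exact one_ne_zero)).some⟩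
  have hP := hG.nat_card_points (q := d * d') (by ring)
  exact ⟨_, _, _, _, hG.isPartialLinearSpace.thasWallis_of_orthogonal_classes
    (by rw [Nat.mul_sub_one, Nat.sub_add_cancel (Nat.le_mul_of_pos_right d (by omega))])
    (by rw [Nat.mul_sub_one, Nat.sub_add_cancel (Nat.le_mul_of_pos_right d' (by omega)), mul_comm])
    rfl (by omega) hP (by rw [hmC, Nat.mul_sub_one, mul_comm d' d]) hparC horthC
    (by rw [hmC', Nat.mul_sub_one]) hparC' horthC'⟩
end

section
/- Let q ≥ 1 and let (X, 𝓛) be a finite incidence structure with exactly q²+q+1 points and exactly q²+q+1 lines, such that every point is incident with exactly q+1 lines and every two distinct lines are incident with at most one common point. Then every two distinct lines of 𝓛 are incident with exactly one common point. -/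
/-- A finite incidence structure with `q² + q + 1` points and `q² + q + 1`
lines (`q ≥ 1`), in which every point is on exactly `q + 1` lines and every two
distinct lines have at most one common point, has the property that every two
distinct lines have exactly one common point. -/
theorem stmt11 {X Λ : Type*} [Finite X] [Finite Λ] {I : X → Λ → Prop} {q : ℕ}
    (hq : 1 ≤ q)
    (hX : Nat.card X = q ^ 2 + q + 1) (hΛ : Nat.card Λ = q ^ 2 + q + 1)
    (hpt : ∀ x : X, {l : Λ | I x l}.ncard = q + 1)
    (hll : ∀ l m : Λ, l ≠ m → {x : X | I x l ∧ I x m}.ncard ≤ 1) :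
    ∀ l m : Λ, l ≠ m → {x : X | I x l ∧ I x m}.ncard = 1 := by
  classical
  haveI := Fintype.ofFinite X
  haveI := Fintype.ofFinite Λ
  have hXc : Fintype.card X = q ^ 2 + q + 1 := by
    simpa [Nat.card_eq_fintype_card] using hX
  have hΛc : Fintype.card Λ = q ^ 2 + q + 1 := by
    simpa [Nat.card_eq_fintype_card] using hΛ
  set P : Λ → Finset X := fun l => Finset.univ.filter (fun x => I x l) with hP
  set L : X → Finset Λ := fun x => Finset.univ.filter (fun l => I x l) with hL
  have hLcard : ∀ x, (L x).card = q + 1 := by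
    intro x
    have h := hpt x
    rwa [Set.ncard_eq_toFinset_card', Set.toFinset_setOf] at h
  -- two distinct lines share at most one point, pointwise version
  have hll2 : ∀ l m : Λ, l ≠ m → ∀ x y : X, I x l → I x m → I y l → I y m → x = y := by
    intro l m hlm x y hxl hxm hyl hym
    have h1 := hll l m hlm
    rw [Set.ncard_le_one_iff (Set.toFinite _)] at h1
    exact h1 ⟨hxl, hxm⟩ ⟨hyl, hym⟩
  -- flags (x, m) with x on l, x on m, m ≠ l
  set T : Λ → Finset (X × Λ) := fun l =>
    (P l).biUnion (fun x => ((L x).erase l).image (fun m => (x, m))) with hT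
  have hTmem : ∀ l p, p ∈ T l ↔ I p.1 l ∧ I p.1 p.2 ∧ p.2 ≠ l := by
    intro l p
    simp only [hT, Finset.mem_biUnion, Finset.mem_image, Finset.mem_erase, hP, hL,
      Finset.mem_filter, Finset.mem_univ, true_and]
    constructor
    · rintro ⟨x, hx, m, ⟨hm, hIm⟩, rfl⟩
      exact ⟨hx, hIm, hm⟩
    · rintro ⟨h1, h2, h3⟩
      exact ⟨p.1, h1, p.2, ⟨h3, h2⟩, rfl⟩
  have hTcard : ∀ l, (T l).card = (P l).card * q := by
    intro l
    have hdisj : ∀ x ∈ P l, ∀ y ∈ P l, x ≠ y →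
        Disjoint (((L x).erase l).image (fun m => (x, m)))
          (((L y).erase l).image (fun m => (y, m))) := by
      intro x _ y _ hxy
      simp only [Finset.disjoint_left, Finset.mem_image]
      rintro p ⟨m, _, rfl⟩ ⟨m', _, h⟩
      have hfst := congrArg Prod.fst h
      simp only at hfst
      exact hxy hfst.symm
    rw [hT, Finset.card_biUnion hdisj]
    have hterm : ∀ x ∈ P l, (((L x).erase l).image (fun m => (x, m))).card = q := by
      intro x hx
      have hinj : Function.Injective (fun m : Λ => (x, m)) := fun a b h => by
        simpa using h
      rw [Finset.card_image_of_injective _ hinj]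
      have hxl : l ∈ L x := by
        simp only [hP, Finset.mem_filter] at hx
        simp [hL, hx.2]
      rw [Finset.card_erase_of_mem hxl, hLcard]
      simp
    rw [Finset.sum_congr rfl hterm, Finset.sum_const, smul_eq_mul]
  -- snd is injective on T l
  have hsndinj : ∀ l, Set.InjOn Prod.snd (T l : Set (X × Λ)) := by
    intro l p1 h1 p2 h2 hsnd
    rw [Finset.mem_coe, hTmem] at h1 h2
    have hx : p1.1 = p2.1 := by
      refine hll2 l p1.2 (Ne.symm h1.2.2) p1.1 p2.1 h1.1 h1.2.1 h2.1 ?_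
      rw [hsnd]; exact h2.2.1
    exact Prod.ext hx hsnd
  -- each line has at most q + 1 points
  have hPle : ∀ l, (P l).card ≤ q + 1 := by
    intro l
    have hmap : ∀ p ∈ T l, Prod.snd p ∈ Finset.univ.erase l := by
      intro p hp
      rw [hTmem] at hp
      simp [hp.2.2]
    have := Finset.card_le_card_of_injOn Prod.snd hmap (hsndinj l)
    rw [hTcard, Finset.card_erase_of_mem (Finset.mem_univ l), Finset.card_univ, hΛc] at this
    have h2 : (P l).card * q ≤ (q + 1) * q := by
      calc (P l).card * q ≤ q ^ 2 + q + 1 - 1 := this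
      _ = (q + 1) * q := by ring_nf; omega
    exact Nat.le_of_mul_le_mul_right h2 hq
  -- double counting: sum of line sizes
  have hsum : ∑ l : Λ, (P l).card = (q ^ 2 + q + 1) * (q + 1) := by
    have : ∑ l : Λ, (P l).card = ∑ x : X, (L x).card := by
      simp only [hP, hL, Finset.card_filter]
      rw [Finset.sum_comm]
    rw [this, Finset.sum_congr rfl (fun x _ => hLcard x), Finset.sum_const, smul_eq_mul,
      Finset.card_univ, hXc]
  -- each line has exactly q + 1 points
  have hPcard : ∀ l, (P l).card = q + 1 := by
    by_contra h
    push_neg at h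
    obtain ⟨l₀, hl₀⟩ := h
    have hlt : (P l₀).card < q + 1 := lt_of_le_of_ne (hPle l₀) hl₀
    have := Finset.sum_lt_sum (fun l (_ : l ∈ Finset.univ) => hPle l)
      ⟨l₀, Finset.mem_univ _, hlt⟩
    rw [hsum, Finset.sum_const, smul_eq_mul, Finset.card_univ, hΛc] at this
    omega
  -- main argument
  intro l m hlm
  have hfin : ({x : X | I x l ∧ I x m}).Finite := Set.toFinite _
  have hne : {x : X | I x l ∧ I x m}.Nonempty := by
    by_contra hempty
    rw [Set.not_nonempty_iff_eq_empty] at hempty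
    have hmap : ∀ p ∈ T l, Prod.snd p ∈ (Finset.univ.erase l).erase m := by
      intro p hp
      rw [hTmem] at hp
      refine Finset.mem_erase.2 ⟨?_, Finset.mem_erase.2 ⟨hp.2.2, Finset.mem_univ _⟩⟩
      intro hpm
      have : p.1 ∈ {x : X | I x l ∧ I x m} := ⟨hp.1, hpm ▸ hp.2.1⟩
      rw [hempty] at this
      exact this
    have hle := Finset.card_le_card_of_injOn Prod.snd hmap (hsndinj l)
    rw [hTcard, hPcard] at hle
    have hcard2 : ((Finset.univ.erase l).erase m).card = q ^ 2 + q + 1 - 2 := by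
      rw [Finset.card_erase_of_mem (Finset.mem_erase.2 ⟨hlm.symm, Finset.mem_univ _⟩),
        Finset.card_erase_of_mem (Finset.mem_univ l), Finset.card_univ, hΛc, Nat.sub_sub]
    rw [hcard2] at hle
    have h4 : 2 ≤ q ^ 2 + q + 1 := by nlinarith
    have h3 := (Nat.le_sub_iff_add_le h4).1 hle
    nlinarith
  have h1 := hll l m hlm
  have h2 := (Set.ncard_pos hfin).2 hne
  omega
end

section
/- Let A be a set of k points in a projective plane of order q such that some line meets A in exactly d points and no line meets A in more than d points, where k > d > 1. Then k ≤ dq − q + d, and equality k = dq − q + d holds if and only if every line of the plane is either disjoint from A or meets A in exactly d points. -/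
/-- Arc bound: if `A` is a set of `k` points in a projective plane of order
`q` such that some line meets `A` in exactly `d` points and no line meets `A`
in more than `d` points, where `k > d > 1`, then `k ≤ dq - q + d`, and
`k = dq - q + d` holds if and only if every line is either disjoint from `A`
or meets `A` in exactly `d` points. -/
theorem stmt12 {X Λ : Type*} {I : X → Λ → Prop} {q d k : ℕ}
    (hP : IsProjectivePlane I q) (A : Set X) (hk : A.ncard = k)
    (hd1 : 1 < d) (hdk : d < k)
    (hex : ∃ l : Λ, {x ∈ A | I x l}.ncard = d)
    (hmax : ∀ l : Λ, {x ∈ A | I x l}.ncard ≤ d) :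
    k ≤ d * q - q + d ∧
    (k = d * q - q + d ↔
      ∀ l : Λ, (∀ x ∈ A, ¬ I x l) ∨ {x ∈ A | I x l}.ncard = d) := by
  classical
  obtain ⟨hX, hΛ, hpp, hll, hlq, hpq⟩ := hP
  have _inst1 := Fintype.ofFinite X
  have _inst2 := Fintype.ofFinite Λ
  -- translate set cardinalities to finset cardinalities
  have hcard : ∀ l : Λ, {x ∈ A | I x l}.ncard = (A.toFinset.filter (fun x => I x l)).card := by
    intro l
    rw [← Set.ncard_coe_finset]
    congr 1
    ext x; simp
  have hkA : A.toFinset.card = k := by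
    rw [← Set.ncard_eq_toFinset_card']; exact hk
  have hLp : ∀ p : X, (Finset.univ.filter (fun l => I p l)).card = q + 1 := by
    intro p
    have h := hpq p
    rwa [Set.ncard_eq_toFinset_card', Set.toFinset_setOf] at h
  -- key counting: lines through p partition A \ {p}
  have key : ∀ p ∈ A,
      ∑ l ∈ Finset.univ.filter (fun l => I p l),
        ((A.toFinset.filter (fun x => I x l)).card - 1) = k - 1 := by
    intro p hp
    have hdisj : ∀ l ∈ Finset.univ.filter (fun l => I p l),
        ∀ m ∈ Finset.univ.filter (fun l => I p l), l ≠ m →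
        Disjoint ((A.toFinset.filter (fun x => I x l)).erase p)
                 ((A.toFinset.filter (fun x => I x m)).erase p) := by
      intro l hl m hm hlm
      simp only [Finset.mem_filter, Finset.mem_univ, true_and] at hl hm
      rw [Finset.disjoint_left]
      intro y hyl hym
      simp only [Finset.mem_erase, Finset.mem_filter, Set.mem_toFinset] at hyl hym
      obtain ⟨a, ha⟩ := Set.ncard_eq_one.mp (hll l m hlm)
      have hpa : p = a := by
        have : p ∈ {x : X | I x l ∧ I x m} := ⟨hl, hm⟩
        rw [ha] at this; exact this
      have hya : y = a := by
        have : y ∈ {x : X | I x l ∧ I x m} := ⟨hyl.2.2, hym.2.2⟩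
        rw [ha] at this; exact this
      exact hyl.1 (hya.trans hpa.symm)
    have hun : (Finset.univ.filter (fun l => I p l)).biUnion
        (fun l => (A.toFinset.filter (fun x => I x l)).erase p) = A.toFinset.erase p := by
      ext y
      simp only [Finset.mem_biUnion, Finset.mem_erase, Finset.mem_filter, Finset.mem_univ,
        Set.mem_toFinset, true_and]
      constructor
      · rintro ⟨l, _, hyp, hyA, _⟩; exact ⟨hyp, hyA⟩
      · rintro ⟨hyp, hyA⟩
        obtain ⟨a, ha⟩ := Set.ncard_eq_one.mp (hpp p y (Ne.symm hyp))
        have : a ∈ {l : Λ | I p l ∧ I y l} := by rw [ha]; rfl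
        exact ⟨a, this.1, hyp, hyA, this.2⟩
    have hterm : ∀ l ∈ Finset.univ.filter (fun l => I p l),
        ((A.toFinset.filter (fun x => I x l)).erase p).card
          = (A.toFinset.filter (fun x => I x l)).card - 1 := by
      intro l hl
      simp only [Finset.mem_filter, Finset.mem_univ, true_and] at hl
      exact Finset.card_erase_of_mem (by simp [Set.mem_toFinset, hp, hl])
    calc ∑ l ∈ Finset.univ.filter (fun l => I p l),
          ((A.toFinset.filter (fun x => I x l)).card - 1)
        = ∑ l ∈ Finset.univ.filter (fun l => I p l),
          ((A.toFinset.filter (fun x => I x l)).erase p).card :=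
          (Finset.sum_congr rfl hterm).symm
      _ = ((Finset.univ.filter (fun l => I p l)).biUnion
            (fun l => (A.toFinset.filter (fun x => I x l)).erase p)).card :=
          (Finset.card_biUnion hdisj).symm
      _ = (A.toFinset.erase p).card := by rw [hun]
      _ = k - 1 := by rw [Finset.card_erase_of_mem (by simpa using hp), hkA]
  -- arithmetic identity
  have harith : d * q - q + d = (q + 1) * (d - 1) + 1 := by
    obtain ⟨e, rfl⟩ : ∃ e, d = e + 1 := ⟨d - 1, by omega⟩
    have h1 : (e + 1) * q = e * q + q := by ring
    have h2 : (q + 1) * (e + 1 - 1) = e * q + e := by rw [Nat.add_sub_cancel]; ring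
    omega
  -- A is nonempty
  obtain ⟨p0, hp0⟩ : A.Nonempty := by
    apply Set.nonempty_of_ncard_ne_zero; omega
  have hbound : ∀ p ∈ A, k - 1 ≤ (q + 1) * (d - 1) := by
    intro p hp
    rw [← key p hp]
    calc ∑ l ∈ Finset.univ.filter (fun l => I p l),
          ((A.toFinset.filter (fun x => I x l)).card - 1)
        ≤ ∑ _l ∈ Finset.univ.filter (fun l => I p l), (d - 1) := by
          apply Finset.sum_le_sum
          intro l _
          have := hmax l
          rw [hcard l] at this
          omega
      _ = (q + 1) * (d - 1) := by rw [Finset.sum_const, hLp, smul_eq_mul]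
  constructor
  · have := hbound p0 hp0
    omega
  constructor
  · -- equality implies all lines 0 or d
    intro hkeq l
    by_cases hmeet : ∃ x ∈ A, I x l
    · obtain ⟨p, hpA, hpl⟩ := hmeet
      right
      have hsum := key p hpA
      have hconst : ∑ _m ∈ Finset.univ.filter (fun m => I p m), (d - 1)
          = (q + 1) * (d - 1) := by rw [Finset.sum_const, hLp, smul_eq_mul]
      have hle : ∀ m ∈ Finset.univ.filter (fun m => I p m),
          (A.toFinset.filter (fun x => I x m)).card - 1 ≤ d - 1 := by
        intro m _
        have := hmax m
        rw [hcard m] at this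
        omega
      have hlmem : l ∈ Finset.univ.filter (fun m => I p m) := by simp [hpl]
      have heq : (A.toFinset.filter (fun x => I x l)).card - 1 = d - 1 := by
        by_contra hne
        have hlt : (A.toFinset.filter (fun x => I x l)).card - 1 < d - 1 :=
          lt_of_le_of_ne (hle l hlmem) hne
        have := Finset.sum_lt_sum hle ⟨l, hlmem, hlt⟩
        rw [hsum, hconst] at this
        omega
      have hple : p ∈ A.toFinset.filter (fun x => I x l) := by
        simp [Set.mem_toFinset, hpA, hpl]
      have hge1 : 1 ≤ (A.toFinset.filter (fun x => I x l)).card :=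
        Finset.card_pos.mpr ⟨p, hple⟩
      have hled : (A.toFinset.filter (fun x => I x l)).card ≤ d := by
        have := hmax l; rwa [hcard l] at this
      rw [hcard l]
      omega
    · left
      intro x hx hxl
      exact hmeet ⟨x, hx, hxl⟩
  · -- all lines 0 or d implies equality
    intro hall
    have hsum := key p0 hp0
    have : ∑ l ∈ Finset.univ.filter (fun l => I p0 l),
        ((A.toFinset.filter (fun x => I x l)).card - 1)
        = (q + 1) * (d - 1) := by
      rw [Finset.sum_congr rfl (fun l hl => ?_), Finset.sum_const, hLp, smul_eq_mul]
      simp only [Finset.mem_filter, Finset.mem_univ, true_and] at hl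
      rcases hall l with hdisj | hdl
      · exact absurd hl (hdisj p0 hp0)
      · rw [hcard l] at hdl; rw [hdl]
    omega
end

section
/- Let A be a maximal arc of degree d in a projective plane P of order q, where 1 < d < q and d divides q, and write d' = q/d. Then the set A' of lines of P that are disjoint from A, viewed as a set of points of the dual plane P', is a maximal arc of degree d' in P'; in particular |A'| = d'q − q + d' = d'(q − d + 1). -/
open Finset

lemma ncard_filter_aux {α : Type*} [Fintype α] (p : α → Prop) [DecidablePred p] :
    {x | p x}.ncard = (univ.filter p).card := by
  rw [Set.ncard_eq_toFinset_card', Set.toFinset_setOf]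

lemma dbl_aux {X Λ : Type*} [Fintype X] [Fintype Λ] (I : X → Λ → Prop)
    [∀ x, DecidablePred fun l => I x l] [∀ l, DecidablePred fun x => I x l]
    (S : Finset X) (T : Finset Λ) :
    ∑ x ∈ S, (T.filter (fun l => I x l)).card = ∑ l ∈ T, (S.filter (fun x => I x l)).card := by
  simp_rw [card_filter]
  exact Finset.sum_comm



/-- The dual arc: if `A` is a maximal arc of degree `d` in a projective plane
of order `q` with `1 < d < q` and `d ∣ q`, and `d' = q/d`, then the set of
lines disjoint from `A`, viewed as points of the dual plane, is a maximal arc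
of degree `d'` there; in particular it has `d'q - q + d' = d'(q - d + 1)`
elements. -/
theorem stmt13 {X Λ : Type*} {I : X → Λ → Prop} {q d : ℕ}
    (hP : IsProjectivePlane I q) (hd1 : 1 < d) (hdq : d < q) (hdvd : d ∣ q)
    {A : Set X} (hA : IsMaximalArc I q d A) :
    IsMaximalArc (fun (l : Λ) (x : X) => I x l) q (q / d)
      {l : Λ | ∀ x ∈ A, ¬ I x l} ∧
    {l : Λ | ∀ x ∈ A, ¬ I x l}.ncard = (q / d) * q - q + q / d ∧
    (q / d) * q - q + q / d = (q / d) * (q - d + 1) := by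
  classical
  obtain ⟨hXf, hLf, hpt, hln, hlp, hpl⟩ := hP
  obtain ⟨hAcard, hAlines⟩ := hA
  have : Fintype X := Fintype.ofFinite X
  have : Fintype Λ := Fintype.ofFinite Λ
  set e := q / d with he
  have hq : d * e = q := Nat.mul_div_cancel' hdvd
  have hd0 : 0 < d := by omega
  have hq0 : 0 < q := by omega
  have he1 : 1 ≤ e := Nat.one_le_div_iff hd0 |>.mpr hdq.le
  have heq : e ≤ q := Nat.div_le_self q d
  have hqz : (d : ℤ) * (e : ℤ) = (q : ℤ) := by exact_mod_cast hq
  set extP : Λ → Prop := fun l => ∀ x ∈ A, ¬ I x l with hextP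
  -- Finset versions of the axioms
  have hlpF : ∀ l : Λ, (univ.filter (fun x => I x l)).card = q + 1 := fun l => by
    rw [← ncard_filter_aux]; exact hlp l
  have hplF : ∀ x : X, (univ.filter (fun l => I x l)).card = q + 1 := fun x => by
    rw [← ncard_filter_aux]; exact hpl x
  have hptF : ∀ x y : X, x ≠ y → (univ.filter (fun l => I x l ∧ I y l)).card = 1 := fun x y h => by
    rw [← ncard_filter_aux]; exact hpt x y h
  set AF : Finset X := univ.filter (fun x => x ∈ A) with hAF
  have hAFc : AF.card = d * q - q + d := by
    rw [hAF, ← ncard_filter_aux]; simpa using hAcard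
  set A'F : Finset Λ := univ.filter extP with hA'F
  -- partition of any finset avoiding x by the lines through x
  have part : ∀ (x : X) (S : Finset X), x ∉ S →
      ∑ l ∈ univ.filter (fun l => I x l), (S.filter (fun y => I y l)).card = S.card := by
    intro x S hx
    rw [← dbl_aux]
    have h1 : ∀ y ∈ S, ((univ.filter fun l => I x l).filter (fun l => I y l)).card = 1 := by
      intro y hy
      rw [Finset.filter_filter]
      exact hptF x y (by rintro rfl; exact hx hy)
    rw [Finset.sum_congr rfl h1]
    simp
  -- secant lines meet A in d points
  have hsec : ∀ l : Λ, ¬ extP l → (AF.filter (fun x => I x l)).card = d := by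
    intro l hl
    rcases hAlines l with h | h
    · exact absurd h hl
    · rw [hAF, Finset.filter_filter, ← ncard_filter_aux]
      exact h
  have hext : ∀ l : Λ, extP l → (AF.filter (fun x => I x l)) = ∅ := by
    intro l hl
    rw [hAF, Finset.filter_filter]
    ext x
    simp only [mem_filter, mem_univ, true_and, Finset.notMem_empty, iff_false]
    rintro ⟨hxA, hI⟩
    exact hl x hxA hI
  -- through any point not in A there are exactly e external lines
  have hthru : ∀ x : X, x ∉ A → ((univ.filter (fun l => I x l)).filter extP).card = e := by
    intro x hx
    have hxAF : x ∉ AF := by simp [hAF, hx]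
    have hsum := part x AF hxAF
    rw [← Finset.sum_filter_add_sum_filter_not (univ.filter (fun l => I x l)) extP] at hsum
    have h1 : ∑ l ∈ (univ.filter (fun l => I x l)).filter extP,
        (AF.filter (fun y => I y l)).card = 0 := by
      refine Finset.sum_eq_zero fun l hl => ?_
      rw [hext l (mem_filter.mp hl).2, Finset.card_empty]
    have h2 : ∑ l ∈ (univ.filter (fun l => I x l)).filter (fun l => ¬ extP l),
        (AF.filter (fun y => I y l)).card
        = d * ((univ.filter (fun l => I x l)).filter (fun l => ¬ extP l)).card := by
      rw [Finset.sum_congr rfl (fun l hl => hsec l (mem_filter.mp hl).2), Finset.sum_const,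
        smul_eq_mul, mul_comm]
    rw [h1, h2, hAFc, zero_add] at hsum
    have hcards := Finset.card_filter_add_card_filter_not (s := univ.filter (fun l => I x l)) (p := extP)
    rw [hplF x] at hcards
    set t := ((univ.filter (fun l => I x l)).filter extP).card
    set s := ((univ.filter (fun l => I x l)).filter (fun l => ¬ extP l)).card
    -- hsum : d * s = d*q - q + d, hcards : t + s = q + 1
    have h2q : q ≤ d * q := Nat.le_mul_of_pos_left q hd0
    have key : d * t = d * e := by
      have h5 : d * t + d * s = d * q + d := by
        rw [← Nat.mul_add, hcards]; ring
      zify [h2q] at hsum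
      zify at h5 ⊢
      linarith [hqz]
    exact Nat.eq_of_mul_eq_mul_left hd0 key
  -- a point of A
  have hAne : AF.Nonempty := card_pos.mp (by rw [hAFc]; exact lt_of_lt_of_le hd0 (Nat.le_add_left d _))
  obtain ⟨x₀, hx₀⟩ := hAne
  -- total number of points
  have hXcard : (univ : Finset X).card = (q + 1) * q + 1 := by
    have hp := part x₀ (univ.erase x₀) (notMem_erase x₀ univ)
    have h1 : ∀ l ∈ univ.filter (fun l => I x₀ l),
        ((univ.erase x₀).filter (fun y => I y l)).card = q := by
      intro l hl
      have hI : I x₀ l := (mem_filter.mp hl).2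
      rw [Finset.filter_erase, Finset.card_erase_of_mem (by simp [hI]), hlpF l]
      omega
    rw [Finset.sum_congr rfl h1, Finset.sum_const, smul_eq_mul, hplF x₀,
      Finset.card_erase_of_mem (mem_univ _)] at hp
    have h2 : 1 ≤ (univ : Finset X).card := card_pos.mpr ⟨x₀, mem_univ _⟩
    have := Nat.eq_add_of_sub_eq h2 hp.symm
    omega
  -- count external lines by double counting
  have hdc := dbl_aux I (univ.filter (fun x => ¬ x ∈ A)) A'F
  have hL : ∀ x ∈ univ.filter (fun x => ¬ x ∈ A), (A'F.filter (fun l => I x l)).card = e := by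
    intro x hx
    have hxA : x ∉ A := by simpa using hx
    have heqF : A'F.filter (fun l => I x l) = (univ.filter (fun l => I x l)).filter extP := by
      rw [hA'F, Finset.filter_filter, Finset.filter_filter]
      ext l
      simp only [mem_filter, mem_univ, true_and]
      tauto
    rw [heqF]
    exact hthru x hxA
  have hR : ∀ l ∈ A'F, ((univ.filter (fun x => ¬ x ∈ A)).filter (fun x => I x l)).card = q + 1 := by
    intro l hl
    have hlext : extP l := by simpa [hA'F] using hl
    rw [Finset.filter_filter, ← hlpF l]
    congr 1
    ext x
    simp only [mem_filter, mem_univ, true_and]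
    exact ⟨fun h => h.2, fun h => ⟨fun hxA => hlext x hxA h, h⟩⟩
  rw [Finset.sum_congr rfl hL, Finset.sum_congr rfl hR, Finset.sum_const, Finset.sum_const,
    smul_eq_mul, smul_eq_mul] at hdc
  have hcompl : (univ.filter (fun x => ¬ x ∈ A)).card = (q + 1) * q + 1 - (d * q - q + d) := by
    have hsplit := Finset.card_filter_add_card_filter_not (s := (univ : Finset X)) (p := fun x => x ∈ A)
    rw [hXcard] at hsplit
    rw [← hAF] at hsplit
    omega
  -- useful inequalities
  have h1 : q ≤ e * q := Nat.le_mul_of_pos_left q (by omega)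
  have h2 : q ≤ d * q := Nat.le_mul_of_pos_left q hd0
  have h3 : d * q ≤ q * q := Nat.mul_le_mul_right q hdq.le
  have h4 : d * q - q + d ≤ (q + 1) * q + 1 := by
    calc d * q - q + d ≤ d * q + d := Nat.add_le_add_right (Nat.sub_le _ _) d
    _ ≤ q * q + q := Nat.add_le_add h3 hdq.le
    _ ≤ (q + 1) * q + 1 := by nlinarith
  have hA'card : A'F.card = e * q - q + e := by
    refine Nat.eq_of_mul_eq_mul_right (show 0 < q + 1 by omega) ?_
    rw [← hdc, hcompl]
    zify [h1, h2, h4]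
    linear_combination (-(q : ℤ) - 1) * hqz
  have hidentity : e * q - q + e = e * (q - d + 1) := by
    zify [h1, hdq.le]
    linear_combination hqz
  have hncard : {l : Λ | ∀ x ∈ A, ¬ I x l}.ncard = e * q - q + e := by
    rw [ncard_filter_aux, ← hA'F, hA'card]
  refine ⟨⟨hncard, ?_⟩, hncard, hidentity⟩
  intro x
  by_cases hx : x ∈ A
  · left
    intro l hl
    exact hl x hx
  · right
    have heqF : (univ.filter (fun l => l ∈ {l : Λ | ∀ x ∈ A, ¬ I x l} ∧ I x l))
        = (univ.filter (fun l => I x l)).filter extP := by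
      rw [Finset.filter_filter]
      ext l
      simp only [mem_filter, mem_univ, true_and, Set.mem_setOf_eq, hextP]
      tauto
    rw [ncard_filter_aux, heqF]
    exact hthru x hx
end
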